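/- arXiv:2208.10750 — 5 statements merged into one kernel-verified Lean document; each statement's English description precedes it below -/
import Mathlib

section
/- In the solvable group S = ℝ² ⋊ ℝ (Sol geometry), the centralizer of any lattice Γ ⊆ S is trivial. -/
/-- The 3-dimensional solvable Lie group `Sol = ℝ² ⋊ ℝ`, realized as the matrices
`[[e^t,0,x],[0,e^{−t},y],[0,0,1]]`, with coordinates `(x,y,t)` and multiplication
`(x,y,t)·(u,v,s) = (x + e^t u, y + e^{−t} v, t+s)`. -/
@[ext] structure Sol : Type where
  x : ℝ
  y : ℝ
  t : ℝ

namespace Sol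

noncomputable instance : Mul Sol :=
  ⟨fun a b => ⟨a.x + Real.exp a.t * b.x, a.y + Real.exp (-a.t) * b.y, a.t + b.t⟩⟩

instance : One Sol := ⟨⟨0, 0, 0⟩⟩

noncomputable instance : Inv Sol :=
  ⟨fun a => ⟨-(Real.exp (-a.t) * a.x), -(Real.exp a.t * a.y), -a.t⟩⟩

@[simp] lemma mul_x (a b : Sol) : (a * b).x = a.x + Real.exp a.t * b.x := rfl
@[simp] lemma mul_y (a b : Sol) : (a * b).y = a.y + Real.exp (-a.t) * b.y := rfl
@[simp] lemma mul_t (a b : Sol) : (a * b).t = a.t + b.t := rfl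
@[simp] lemma one_x : (1 : Sol).x = 0 := rfl
@[simp] lemma one_y : (1 : Sol).y = 0 := rfl
@[simp] lemma one_t : (1 : Sol).t = 0 := rfl
@[simp] lemma inv_x (a : Sol) : (a⁻¹).x = -(Real.exp (-a.t) * a.x) := rfl
@[simp] lemma inv_y (a : Sol) : (a⁻¹).y = -(Real.exp a.t * a.y) := rfl
@[simp] lemma inv_t (a : Sol) : (a⁻¹).t = -a.t := rfl

noncomputable instance : Group Sol where
  mul := (· * ·)
  one := 1
  inv := (·⁻¹)
  mul_assoc a b c := by
    ext <;> simp [Real.exp_add, neg_add] <;> ring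
  one_mul a := by ext <;> simp
  mul_one a := by ext <;> simp
  inv_mul_cancel a := by
    ext <;> simp [← Real.exp_add] <;> ring_nf <;> simp

end Sol

/-- Topology on `Sol`, induced from its global coordinates in `ℝ³`. -/
instance : TopologicalSpace Sol :=
  TopologicalSpace.induced (fun g => (g.x, g.y, g.t)) inferInstance

instance : MeasurableSpace Sol := borel Sol

/-- (Left) Haar measure on `Sol`: in the coordinates `(x,y,t)` the left-invariant
volume is just Lebesgue measure `dx dy dt`. -/
noncomputable def solHaar : MeasureTheory.Measure Sol :=
  (MeasureTheory.volume : MeasureTheory.Measure (ℝ × ℝ × ℝ)).map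
    (fun p => ⟨p.1, p.2.1, p.2.2⟩)

/-!
If `g ≠ 1` centralizes `Γ`, then `Γ` lies in the centralizer of `g`: the plane `t = 0` when
`g.t = 0`, and otherwise a conjugate of the one-parameter group `vertical` by a horizontal element.
In a measure-preserving chart `G × α → Sol` this subgroup acts by translations of the `G`-factor,
and discreteness of `Γ` makes those translations `δ`-separated. A set meeting every coset `Γ g`
therefore meets each fibre `G × {a}` in measure at least that of a `δ/2`-ball, and integrating
over the infinite-measure factor `α` shows that it has infinite Haar measure.
-/

open MeasureTheory Set Metric Filter Topology

section Covering

variable {G : Type*} [NormedAddCommGroup G] {L : Set G} {δ : ℝ}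

lemma pairwiseDisjoint_ball_of_pairwise_le_dist (hL : L.Pairwise (δ ≤ dist · ·)) :
    L.PairwiseDisjoint (ball · (δ / 2)) := by
  intro ℓ₁ h₁ ℓ₂ h₂ hne
  refine disjoint_left.2 fun z hz₁ hz₂ => (hL h₁ h₂ hne).not_gt ?_
  calc dist ℓ₁ ℓ₂ ≤ dist z ℓ₁ + dist z ℓ₂ := dist_triangle_left _ _ _
    _ < δ / 2 + δ / 2 := add_lt_add hz₁ hz₂
    _ = δ := add_halves δ

variable [MeasurableSpace G] [BorelSpace G] [TopologicalSpace.SeparableSpace G] (ν : Measure G)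
  [ν.IsAddLeftInvariant]

/-- The pieces `E ∩ ball ℓ (δ/2)` are disjoint, and translating them back by `-ℓ` covers
`ball 0 (δ/2)`. -/
lemma measure_ball_le_of_forall_exists_add_mem (hδ : 0 < δ) (hL : L.Pairwise (δ ≤ dist · ·))
    {E : Set G} (hE : MeasurableSet E) (hcov : ∀ g, ∃ ℓ ∈ L, ℓ + g ∈ E) :
    ν (ball 0 (δ / 2)) ≤ ν E := by
  have hdisj := pairwiseDisjoint_ball_of_pairwise_le_dist hL
  have hLc : L.Countable :=
    hdisj.countable_of_isOpen (fun _ _ => isOpen_ball) fun ℓ _ => nonempty_ball.2 (by positivity)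
  have hsub : ball 0 (δ / 2) ⊆ ⋃ ℓ ∈ L, (ℓ + ·) ⁻¹' (E ∩ ball ℓ (δ / 2)) := by
    intro g hg
    obtain ⟨ℓ, hℓ, hgE⟩ := hcov g
    refine mem_biUnion hℓ ⟨hgE, ?_⟩
    simpa using hg
  calc ν (ball 0 (δ / 2))
      ≤ ∑' ℓ : L, ν ((ℓ + ·) ⁻¹' (E ∩ ball (ℓ : G) (δ / 2))) :=
        (measure_mono hsub).trans (measure_biUnion_le ν hLc _)
    _ = ∑' ℓ : L, ν (E ∩ ball (ℓ : G) (δ / 2)) :=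
        tsum_congr fun ℓ => measure_preimage_add ν _ _
    _ = ν (⋃ ℓ ∈ L, E ∩ ball ℓ (δ / 2)) :=
        (measure_biUnion hLc (hdisj.mono fun _ => inter_subset_right)
          fun _ _ => hE.inter measurableSet_ball).symm
    _ ≤ ν E := measure_mono (iUnion₂_subset fun _ _ => inter_subset_left)

lemma prod_eq_top_of_forall_exists_add_mem [SFinite ν] [ν.IsOpenPosMeasure]
    {α : Type*} [MeasurableSpace α] (μ : Measure α) [SFinite μ] (hμ : μ univ = ⊤)
    (hδ : 0 < δ) (hL : L.Pairwise (δ ≤ dist · ·)) {E : Set (G × α)} (hE : MeasurableSet E)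
    (hcov : ∀ g a, ∃ ℓ ∈ L, (ℓ + g, a) ∈ E) :
    ν.prod μ E = ⊤ := by
  have hball : ν (ball 0 (δ / 2)) ≠ 0 := (measure_ball_pos ν _ (by positivity)).ne'
  rw [Measure.prod_apply_symm hE, eq_top_iff]
  calc ⊤ = ∫⁻ _, ν (ball 0 (δ / 2)) ∂μ := by rw [lintegral_const, hμ, ENNReal.mul_top hball]
    _ ≤ ∫⁻ a, ν ((·, a) ⁻¹' E) ∂μ :=
      lintegral_mono fun a => measure_ball_le_of_forall_exists_add_mem ν hδ hL
        (hE.preimage (measurable_id.prodMk measurable_const)) (hcov · a)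

end Covering

lemma Subgroup.exists_pos_pairwise_le_dist_image {H G : Type*} [Group H] [TopologicalSpace H]
    [SeminormedAddCommGroup G] (Γ : Subgroup H) [hΓ : DiscreteTopology Γ] {ι : G → H}
    (hι : ContinuousAt ι 0) (hι0 : ι 0 = 1) {f : H → G}
    (hf : ∀ γ₁ ∈ Γ, ∀ γ₂ ∈ Γ, γ₂⁻¹ * γ₁ = ι (f γ₁ - f γ₂)) :
    ∃ δ > 0, (f '' Γ).Pairwise (δ ≤ dist · ·) := by
  obtain ⟨U, hUo, hU⟩ := discreteTopology_subtype_iff'.1 hΓ 1 Γ.one_mem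
  have h1U : (1 : H) ∈ U := (hU.symm ▸ rfl : (1 : H) ∈ U ∩ Γ).1
  obtain ⟨δ, hδ, hball⟩ := Metric.mem_nhds_iff.1 (hι (hι0 ▸ hUo.mem_nhds h1U))
  refine ⟨δ, hδ, ?_⟩
  rintro _ ⟨γ₁, h₁, rfl⟩ _ ⟨γ₂, h₂, rfl⟩ hne
  by_contra! hlt
  have hmem : γ₂⁻¹ * γ₁ ∈ U ∩ Γ :=
    ⟨hf γ₁ h₁ γ₂ h₂ ▸ hball (by simpa [dist_eq_norm] using hlt), mul_mem (inv_mem h₂) h₁⟩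
  rw [hU, mem_singleton_iff, inv_mul_eq_one] at hmem
  exact hne (congrArg f hmem.symm)

lemma Real.measurePreserving_exp_mul_exp_neg_mul (τ : ℝ) :
    MeasurePreserving (fun w : ℝ × ℝ => (Real.exp τ * w.1, Real.exp (-τ) * w.2)) volume volume := by
  refine ⟨by fun_prop, ?_⟩
  rw [Measure.volume_eq_prod, ← Prod.map_def,
    ← Measure.map_prod_map _ _ (measurable_const_mul _) (measurable_const_mul _),
    Real.map_volume_mul_left (Real.exp_ne_zero _), Real.map_volume_mul_left (Real.exp_ne_zero _),
    Measure.prod_smul_left, Measure.prod_smul_right, smul_smul, ← ENNReal.ofReal_mul (abs_nonneg _),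
    ← abs_mul, ← mul_inv, ← Real.exp_add, add_neg_cancel, Real.exp_zero]
  simp

namespace Sol

lemma continuous_coords : Continuous fun g : Sol => (g.x, g.y, g.t) := continuous_induced_dom

@[fun_prop] lemma continuous_x : Continuous Sol.x := continuous_coords.fst
@[fun_prop] lemma continuous_y : Continuous Sol.y := continuous_coords.snd.fst
@[fun_prop] lemma continuous_t : Continuous Sol.t := continuous_coords.snd.snd

lemma continuous_iff_continuous_coords {X : Type*} [TopologicalSpace X] {f : X → Sol} :
    Continuous f ↔ Continuous fun p => ((f p).x, (f p).y, (f p).t) :=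
  continuous_induced_rng

instance : IsTopologicalGroup Sol where
  continuous_mul := continuous_iff_continuous_coords.2 (by simp only [mul_x, mul_y, mul_t]; fun_prop)
  continuous_inv := continuous_iff_continuous_coords.2 (by simp only [inv_x, inv_y, inv_t]; fun_prop)

instance : BorelSpace Sol := ⟨rfl⟩

def horizontal (v : ℝ × ℝ) : Sol := ⟨v.1, v.2, 0⟩

def vertical (t : ℝ) : Sol := ⟨0, 0, t⟩

@[simp] lemma horizontal_x (v : ℝ × ℝ) : (horizontal v).x = v.1 := rfl
@[simp] lemma horizontal_y (v : ℝ × ℝ) : (horizontal v).y = v.2 := rfl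
@[simp] lemma horizontal_t (v : ℝ × ℝ) : (horizontal v).t = 0 := rfl
@[simp] lemma vertical_x (t : ℝ) : (vertical t).x = 0 := rfl
@[simp] lemma vertical_y (t : ℝ) : (vertical t).y = 0 := rfl
@[simp] lemma vertical_t (t : ℝ) : (vertical t).t = t := rfl

@[fun_prop] lemma continuous_horizontal : Continuous horizontal :=
  continuous_iff_continuous_coords.2 (by simp only [horizontal]; fun_prop)

@[fun_prop] lemma continuous_vertical : Continuous vertical :=
  continuous_iff_continuous_coords.2 (by simp only [vertical]; fun_prop)

lemma horizontal_add (u v : ℝ × ℝ) : horizontal (u + v) = horizontal u * horizontal v := by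
  ext <;> simp

lemma vertical_add (s t : ℝ) : vertical (s + t) = vertical s * vertical t := by
  ext <;> simp

lemma eq_horizontal_of_t_eq_zero {γ : Sol} (hγ : γ.t = 0) : γ = horizontal (γ.x, γ.y) := by
  ext <;> simp [hγ]

lemma t_eq_zero_of_commute {g γ : Sol} (hg : g.t = 0) (hg1 : g ≠ 1) (h : Commute g γ) :
    γ.t = 0 := by
  have hx : g.x * (Real.exp γ.t - 1) = 0 := by
    have := congrArg Sol.x h.eq
    simp only [mul_x, hg, Real.exp_zero] at this
    linear_combination -this
  have hy : g.y * (Real.exp (-γ.t) - 1) = 0 := by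
    have := congrArg Sol.y h.eq
    simp only [mul_y, hg, neg_zero, Real.exp_zero] at this
    linear_combination -this
  by_contra hγ
  simp only [mul_eq_zero, sub_eq_zero, Real.exp_eq_one_iff, neg_eq_zero, hγ, or_false] at hx hy
  exact hg1 (Sol.ext hx hy hg)

lemma eq_vertical_of_commute_vertical {τ : ℝ} {γ : Sol} (hτ : τ ≠ 0)
    (h : Commute (vertical τ) γ) : γ = vertical γ.t := by
  have hx : γ.x * (Real.exp τ - 1) = 0 := by
    have := congrArg Sol.x h.eq
    simp only [mul_x, vertical_x, vertical_t, zero_add, mul_zero, add_zero] at this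
    linear_combination this
  have hy : γ.y * (Real.exp (-τ) - 1) = 0 := by
    have := congrArg Sol.y h.eq
    simp only [mul_y, vertical_y, vertical_t, zero_add, mul_zero, add_zero] at this
    linear_combination this
  simp only [mul_eq_zero, sub_eq_zero, Real.exp_eq_one_iff, neg_eq_zero, hτ, or_false] at hx hy
  ext <;> simp [hx, hy]

lemma exists_eq_horizontal_conj_vertical {g : Sol} (hg : g.t ≠ 0) :
    ∃ c : ℝ × ℝ, g = horizontal c * vertical g.t * (horizontal c)⁻¹ := by
  have h₁ : 1 - Real.exp g.t ≠ 0 := by simpa [sub_eq_zero, eq_comm (a := (1 : ℝ))] using hg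
  have h₂ : 1 - Real.exp (-g.t) ≠ 0 := by simpa [sub_eq_zero, eq_comm (a := (1 : ℝ))] using hg
  refine ⟨(g.x / (1 - Real.exp g.t), g.y / (1 - Real.exp (-g.t))), ?_⟩
  ext <;> simp <;> field_simp <;> ring

lemma eq_conj_vertical_of_commute {g γ h : Sol} {τ : ℝ} (hτ : τ ≠ 0)
    (hg : g = h * vertical τ * h⁻¹) (hγ : Commute g γ) : γ = h * vertical γ.t * h⁻¹ := by
  have hconj : Commute (vertical τ) (h⁻¹ * γ * h) := by
    rw [← Commute.conj_iff h, ← hg]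
    simpa [mul_assoc] using hγ
  have := eq_vertical_of_commute_vertical hτ hconj
  rw [show (h⁻¹ * γ * h).t = γ.t by simp] at this
  rw [← this]
  group

lemma measurePreserving_mk :
    MeasurePreserving (fun p : ℝ × ℝ × ℝ => (⟨p.1, p.2.1, p.2.2⟩ : Sol)) volume solHaar :=
  ⟨(continuous_iff_continuous_coords.2 continuous_id).measurable, rfl⟩

lemma measurePreserving_horizontal_mul_vertical :
    MeasurePreserving (fun z : (ℝ × ℝ) × ℝ => horizontal z.1 * vertical z.2) volume solHaar := by
  convert measurePreserving_mk.comp volume_preserving_prodAssoc using 1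
  · rfl
  funext z
  ext <;> simp [MeasurableEquiv.prodAssoc, Equiv.prodAssoc]

lemma measurePreserving_horizontal_mul_vertical_mul_horizontal (c : ℝ × ℝ) :
    MeasurePreserving (fun z : ℝ × (ℝ × ℝ) => horizontal c * vertical z.1 * horizontal z.2)
      volume solHaar := by
  have hfiber : MeasurePreserving (fun z : ℝ × (ℝ × ℝ) =>
      (z.1, c + (Real.exp z.1 * z.2.1, Real.exp (-z.1) * z.2.2))) volume volume :=
    MeasurePreserving.skew_product (MeasurePreserving.id volume) (by fun_prop)
      (.of_forall fun τ => ((measurePreserving_add_left volume c).comp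
        (Real.measurePreserving_exp_mul_exp_neg_mul τ)).map_eq)
  convert (measurePreserving_horizontal_mul_vertical.comp Measure.measurePreserving_swap).comp
    hfiber using 1
  funext z
  ext <;> simp

lemma solHaar_eq_top_of_translation_chart {G α : Type*} [NormedAddCommGroup G]
    [MeasurableSpace G] [BorelSpace G] [TopologicalSpace.SeparableSpace G] {ν : Measure G}
    [ν.IsAddLeftInvariant] [SFinite ν] [ν.IsOpenPosMeasure] [MeasurableSpace α] {μ : Measure α}
    [SFinite μ] (hμ : μ univ = ⊤) {ψ : G × α → Sol} (hψ : MeasurePreserving ψ (ν.prod μ) solHaar)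
    {ι : G → Sol} (hι : ContinuousAt ι 0) (hι_add : ∀ u v, ι (u + v) = ι u * ι v)
    (hιψ : ∀ ℓ g a, ι ℓ * ψ (g, a) = ψ (ℓ + g, a))
    (Γ : Subgroup Sol) [DiscreteTopology Γ] {f : Sol → G} (hΓ : ∀ γ ∈ Γ, γ = ι (f γ))
    {s : Set Sol} (hs : MeasurableSet s) (hcov : ∀ g, ∃ γ ∈ Γ, γ * g ∈ s) :
    solHaar s = ⊤ := by
  have hι0 : ι 0 = 1 := by simpa using hι_add 0 0
  have hι_sub (u v : G) : (ι v)⁻¹ * ι u = ι (u - v) := by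
    rw [inv_mul_eq_iff_eq_mul, ← hι_add, add_sub_cancel]
  obtain ⟨δ, hδ, hL⟩ := Γ.exists_pos_pairwise_le_dist_image hι hι0 fun γ₁ h₁ γ₂ h₂ => by
    rw [← hι_sub, ← hΓ γ₁ h₁, ← hΓ γ₂ h₂]
  rw [← hψ.measure_preimage hs.nullMeasurableSet]
  refine prod_eq_top_of_forall_exists_add_mem ν μ hμ hδ hL (hs.preimage hψ.measurable)
    fun g a => ?_
  obtain ⟨γ, hγ, hγs⟩ := hcov (ψ (g, a))
  refine ⟨f γ, mem_image_of_mem f hγ, ?_⟩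
  rwa [mem_preimage, ← hιψ, ← hΓ γ hγ]

lemma solHaar_eq_top_of_forall_t_eq_zero (Γ : Subgroup Sol) [DiscreteTopology Γ]
    (hΓ : ∀ γ ∈ Γ, γ.t = 0) {s : Set Sol} (hs : MeasurableSet s)
    (hcov : ∀ g, ∃ γ ∈ Γ, γ * g ∈ s) : solHaar s = ⊤ :=
  solHaar_eq_top_of_translation_chart Real.volume_univ measurePreserving_horizontal_mul_vertical
    continuous_horizontal.continuousAt horizontal_add
    (fun ℓ g a => by rw [← mul_assoc, ← horizontal_add])
    Γ (fun γ hγ => eq_horizontal_of_t_eq_zero (hΓ γ hγ)) hs hcov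

lemma solHaar_eq_top_of_forall_eq_conj_vertical (Γ : Subgroup Sol) [DiscreteTopology Γ]
    (c : ℝ × ℝ) (hΓ : ∀ γ ∈ Γ, γ = horizontal c * vertical γ.t * (horizontal c)⁻¹)
    {s : Set Sol} (hs : MeasurableSet s) (hcov : ∀ g, ∃ γ ∈ Γ, γ * g ∈ s) : solHaar s = ⊤ :=
  solHaar_eq_top_of_translation_chart (measure_univ_of_isAddLeftInvariant volume)
    (measurePreserving_horizontal_mul_vertical_mul_horizontal c)
    (ι := fun τ => horizontal c * vertical τ * (horizontal c)⁻¹) (by fun_prop)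
    (fun u v => by simp [vertical_add, mul_assoc]) (fun ℓ τ w => by simp [vertical_add, mul_assoc])
    Γ hΓ hs hcov

end Sol

open Sol

/-- The centralizer of any lattice `Γ` in `Sol` (a discrete subgroup of
finite covolume: some set of finite Haar measure contains representatives of all cosets)
is trivial. -/
theorem sol_centralizer_of_lattice_trivial (Γ : Subgroup Sol)
    (hdisc : DiscreteTopology Γ)
    (hvol : ∃ s : Set Sol, solHaar s < ⊤ ∧ ∀ g : Sol, ∃ γ ∈ Γ, γ * g ∈ s) :
    Subgroup.centralizer (Γ : Set Sol) = ⊥ := by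
  obtain ⟨s₀, hs₀, hcov₀⟩ := hvol
  set s := toMeasurable solHaar s₀
  have hs : MeasurableSet s := measurableSet_toMeasurable _ _
  have hs_top : solHaar s ≠ ⊤ := (measure_toMeasurable s₀).symm ▸ hs₀.ne
  have hcov : ∀ g, ∃ γ ∈ Γ, γ * g ∈ s := fun g =>
    (hcov₀ g).imp fun _ hγ => ⟨hγ.1, subset_toMeasurable _ _ hγ.2⟩
  refine (Subgroup.eq_bot_iff_forall _).2 fun g hg => ?_
  by_contra hg1
  have hcomm (γ : Sol) (hγ : γ ∈ Γ) : Commute g γ := (Subgroup.mem_centralizer_iff.1 hg γ hγ).symm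
  by_cases hgt : g.t = 0
  · exact hs_top <| solHaar_eq_top_of_forall_t_eq_zero Γ
      (fun γ hγ => t_eq_zero_of_commute hgt hg1 (hcomm γ hγ)) hs hcov
  · obtain ⟨c, hc⟩ := exists_eq_horizontal_conj_vertical hgt
    exact hs_top <| solHaar_eq_top_of_forall_eq_conj_vertical Γ c
      (fun γ hγ => eq_conj_vertical_of_commute hgt hc (hcomm γ hγ)) hs hcov
end

section
/- For A ∈ SL₂(ℤ) with tr(A) > 2, the semidirect product Γ_A = ℤ² ⋊_A ℤ, realized as the group of matrices [[Aⁿ, Z],[0,1]] with n ∈ ℤ and Z ∈ ℤ², is a discrete, cocompact subgroup of the group S_A = {[[Aᵗ, W],[0,1]] : t ∈ ℝ, W ∈ ℝ²}, where Aᵗ is defined via real diagonalization of A. -/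
/-!
The points of `Γ_A` are integral matrices: `Aⁿ` is integral because `A⁻¹ = adj A` is, so `Γ_A`
lies in the discrete set of integral matrices. For cocompactness, write `t = s + ⌊t⌋` with
`s ∈ [0, 1)` and split `A⁻ˢ W` into its integer and fractional parts: every element of `S_A` is
then a product `k γ` with `γ ∈ Γ_A` and `k` in the continuous image of the cube `[0, 1]³`.
-/

open Matrix Set

section SolGroup

variable {n m : Type*}

def solGroup [DecidableEq m] (P : ℝ → Matrix n n ℝ) : Set (Matrix (n ⊕ m) (n ⊕ m) ℝ) :=
  {M | ∃ (t : ℝ) (W : Matrix n m ℝ), M = fromBlocks (P t) W 0 1}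

def solLattice [DecidableEq m] (P : ℝ → Matrix n n ℝ) : Set (Matrix (n ⊕ m) (n ⊕ m) ℝ) :=
  {M | ∃ (k : ℤ) (Z : Matrix n m ℤ), M = fromBlocks (P k) (Z.map Int.cast) 0 1}

theorem solLattice_subset_solGroup [DecidableEq m] (P : ℝ → Matrix n n ℝ) :
    solLattice (m := m) P ⊆ solGroup P := by
  rintro _ ⟨k, Z, rfl⟩
  exact ⟨k, Z.map Int.cast, rfl⟩

theorem Matrix.fromBlocks_zero_one_mul [Fintype n] [Fintype m] [DecidableEq m] {R : Type*}
    [Ring R] (X Y : Matrix n n R) (U V : Matrix n m R) :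
    fromBlocks X U 0 (1 : Matrix m m R) * fromBlocks Y V 0 1 =
      fromBlocks (X * Y) (X * V + U) 0 1 := by
  simp [fromBlocks_multiply]

theorem discreteTopology_range_map_intCast {ι κ : Type*} [Finite ι] [Finite κ] :
    DiscreteTopology (range fun Z : Matrix ι κ ℤ => Z.map (Int.cast : ℤ → ℝ)) :=
  (Int.isClosedEmbedding_coe_real.isEmbedding.matrix_map).toHomeomorph.discreteTopology_iff.mp
    inferInstance

theorem discreteTopology_solLattice [Finite n] [Finite m] [DecidableEq m]
    {P : ℝ → Matrix n n ℝ}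
    (hP : ∀ k : ℤ, P k ∈ range fun M : Matrix n n ℤ => M.map (Int.cast : ℤ → ℝ)) :
    DiscreteTopology (solLattice (m := m) P) := by
  refine discreteTopology_range_map_intCast.of_subset ?_
  rintro _ ⟨k, Z, rfl⟩
  obtain ⟨A, hA⟩ := hP k
  exact ⟨fromBlocks A Z 0 1, by simp [fromBlocks_map, hA]⟩

theorem Submonoid.apply_intCast_mem {R : Type*} [Monoid R] (S : Submonoid R) {P : ℝ → R}
    (hadd : ∀ a b, P (a + b) = P a * P b) (h1 : P 1 ∈ S) (hneg1 : P (-1) ∈ S) (k : ℤ) :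
    P k ∈ S := by
  induction k using Int.induction_on with
  | zero => simpa [← hadd] using S.mul_mem h1 hneg1
  | succ k ih => simpa [hadd] using S.mul_mem ih h1
  | pred k ih => simpa [sub_eq_add_neg, hadd] using S.mul_mem ih hneg1

theorem Matrix.eq_map_adjugate_of_mul_map_eq_one [Fintype n] [DecidableEq n] {R S : Type*}
    [CommRing R] [CommRing S]
    (f : R →+* S) {A : Matrix n n R} (hA : A.det = 1) {X : Matrix n n S}
    (hX : X * A.map f = 1) : X = A.adjugate.map f :=
  left_inv_eq_right_inv hX <| by
    rw [← Matrix.map_mul, mul_adjugate, hA, one_smul, Matrix.map_one _ f.map_zero f.map_one]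

theorem apply_intCast_mem_range_map_intCast [Fintype n] [DecidableEq n] {P : ℝ → Matrix n n ℝ}
    (hadd : ∀ a b, P (a + b) = P a * P b) (h0 : P 0 = 1) {A : Matrix n n ℤ} (hA : A.det = 1)
    (h1 : P 1 = A.map Int.cast) (k : ℤ) :
    P k ∈ range fun M : Matrix n n ℤ => M.map (Int.cast : ℤ → ℝ) := by
  have hneg1 : P (-1) = A.adjugate.map Int.cast :=
    eq_map_adjugate_of_mul_map_eq_one (Int.castRingHom ℝ) hA <| by
      simpa [← h1, ← hadd] using h0
  exact MonoidHom.mem_mrange.mp <|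
    (MonoidHom.mrange (Int.castRingHom ℝ).mapMatrix).apply_intCast_mem hadd
      (MonoidHom.mem_mrange.mpr ⟨A, h1.symm⟩) (MonoidHom.mem_mrange.mpr ⟨_, hneg1.symm⟩) k

theorem exists_isCompact_mul_solLattice_eq [Fintype n] [DecidableEq n] [Fintype m]
    [DecidableEq m] {P : ℝ → Matrix n n ℝ}
    (hadd : ∀ a b, P (a + b) = P a * P b) (h0 : P 0 = 1) (hcont : Continuous P) :
    ∃ K ⊆ solGroup (m := m) P, IsCompact K ∧
      ∀ g ∈ solGroup P, ∃ k ∈ K, ∃ γ ∈ solLattice P, g = k * γ := by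
  let cube : Set (Matrix n m ℝ) := univ.pi fun _ => univ.pi fun _ => Icc 0 1
  let ψ : ℝ × Matrix n m ℝ → Matrix (n ⊕ m) (n ⊕ m) ℝ := fun p =>
    fromBlocks (P p.1) (P p.1 * p.2) 0 1
  refine ⟨ψ '' (Icc 0 1 ×ˢ cube), ?_, ?_, ?_⟩
  · rintro _ ⟨p, -, rfl⟩
    exact ⟨p.1, _, rfl⟩
  · exact (isCompact_Icc.prod (isCompact_univ_pi fun _ => isCompact_univ_pi fun _ =>
      isCompact_Icc)).image (by fun_prop)
  · rintro _ ⟨t, W, rfl⟩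
    set s := Int.fract t
    set Y := P (-s) * W
    have hfract : Y.map Int.fract ∈ cube := fun i _ j _ =>
      ⟨Int.fract_nonneg _, (Int.fract_lt_one _).le⟩
    refine ⟨ψ (s, Y.map Int.fract), ⟨(s, _), ⟨⟨Int.fract_nonneg _, (Int.fract_lt_one _).le⟩,
      hfract⟩, rfl⟩, _, ⟨⌊t⌋, Y.map Int.floor, rfl⟩, ?_⟩
    have hY : (Y.map Int.floor).map Int.cast + Y.map Int.fract = Y := by
      ext i j; simp [Int.floor_add_fract]
    dsimp only [ψ]
    rw [fromBlocks_zero_one_mul, ← Matrix.mul_add, hY, ← Matrix.mul_assoc, ← hadd, ← hadd,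
      add_neg_cancel, h0, Matrix.one_mul, Int.fract_add_floor]

end SolGroup

noncomputable def conjExpDiag (B : GL (Fin 2) ℝ) (l t : ℝ) : Matrix (Fin 2) (Fin 2) ℝ :=
  ((B⁻¹ : GL (Fin 2) ℝ) : Matrix (Fin 2) (Fin 2) ℝ) *
    !![Real.exp (t * l), 0; 0, Real.exp (-(t * l))] * (B : Matrix (Fin 2) (Fin 2) ℝ)

section ConjExpDiag

variable (B : GL (Fin 2) ℝ) (l : ℝ)

theorem conjExpDiag_add (a b : ℝ) :
    conjExpDiag B l (a + b) = conjExpDiag B l a * conjExpDiag B l b := by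
  have hdiag : !![Real.exp ((a + b) * l), 0; 0, Real.exp (-((a + b) * l))] =
      !![Real.exp (a * l), 0; 0, Real.exp (-(a * l))] *
        !![Real.exp (b * l), 0; 0, Real.exp (-(b * l))] := by
    simp [← Real.exp_add, add_mul, add_comm]
  simp only [conjExpDiag, hdiag, Matrix.mul_assoc, Units.mul_inv_cancel_left]

theorem conjExpDiag_zero : conjExpDiag B l 0 = 1 := by
  simp [conjExpDiag, ← one_fin_two]

theorem continuous_conjExpDiag : Continuous (conjExpDiag B l) := by
  unfold conjExpDiag
  fun_prop

theorem conjExpDiag_one {A : Matrix (Fin 2) (Fin 2) ℤ}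
    (hBA : (B : Matrix (Fin 2) (Fin 2) ℝ) * A.map Int.cast *
        ((B⁻¹ : GL (Fin 2) ℝ) : Matrix (Fin 2) (Fin 2) ℝ) =
      !![Real.exp l, 0; 0, Real.exp (-l)]) :
    conjExpDiag B l 1 = A.map Int.cast := by
  simp [conjExpDiag, ← hBA, Matrix.mul_assoc]

end ConjExpDiag

theorem sol_lattice_discrete_cocompact_general
    (A : Matrix (Fin 2) (Fin 2) ℤ) (hdet : A.det = 1)
    (B : GL (Fin 2) ℝ) (l : ℝ)
    (hBA : (B : Matrix (Fin 2) (Fin 2) ℝ) * A.map Int.cast *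
        ((B⁻¹ : GL (Fin 2) ℝ) : Matrix (Fin 2) (Fin 2) ℝ) =
      !![Real.exp l, 0; 0, Real.exp (-l)])
    (Apow : ℝ → Matrix (Fin 2) (Fin 2) ℝ)
    (hApow : ∀ t : ℝ, Apow t =
      ((B⁻¹ : GL (Fin 2) ℝ) : Matrix (Fin 2) (Fin 2) ℝ) *
        !![Real.exp (t * l), 0; 0, Real.exp (-(t * l))] *
        (B : Matrix (Fin 2) (Fin 2) ℝ))
    (SA : Set (Matrix (Fin 2 ⊕ Fin 1) (Fin 2 ⊕ Fin 1) ℝ))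
    (hSA : SA = {M | ∃ (t : ℝ) (W : Matrix (Fin 2) (Fin 1) ℝ),
      M = Matrix.fromBlocks (Apow t) W 0 1})
    (ΓA : Set (Matrix (Fin 2 ⊕ Fin 1) (Fin 2 ⊕ Fin 1) ℝ))
    (hΓA : ΓA = {M | ∃ (n : ℤ) (Z : Matrix (Fin 2) (Fin 1) ℤ),
      M = Matrix.fromBlocks (Apow (n : ℝ)) (Z.map Int.cast) 0 1}) :
    ΓA ⊆ SA ∧ DiscreteTopology ↥ΓA ∧
      ∃ K : Set (Matrix (Fin 2 ⊕ Fin 1) (Fin 2 ⊕ Fin 1) ℝ),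
        K ⊆ SA ∧ IsCompact K ∧ ∀ g ∈ SA, ∃ k ∈ K, ∃ γ ∈ ΓA, g = k * γ := by
  obtain rfl : Apow = conjExpDiag B l := funext hApow
  obtain rfl : SA = solGroup (conjExpDiag B l) := hSA
  obtain rfl : ΓA = solLattice (conjExpDiag B l) := hΓA
  have hadd := conjExpDiag_add B l
  have h0 := conjExpDiag_zero B l
  exact ⟨solLattice_subset_solGroup _,
    discreteTopology_solLattice
      (apply_intCast_mem_range_map_intCast hadd h0 hdet (conjExpDiag_one B l hBA)),
    exists_isCompact_mul_solLattice_eq hadd h0 (continuous_conjExpDiag B l)⟩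

/-- For `A ∈ SL₂(ℤ)` with `tr(A) > 2`, diagonalized over `ℝ` as
`B A B⁻¹ = diag(e^λ, e^{−λ})` (`λ ≠ 0`), define `Aᵗ = B⁻¹ diag(e^{tλ}, e^{−tλ}) B`.
Then the semidirect product `Γ_A = ℤ² ⋊_A ℤ`, realized as the matrices
`[[Aⁿ, Z],[0,1]]` with `n ∈ ℤ`, `Z ∈ ℤ²`, is a discrete cocompact subgroup of
`S_A = {[[Aᵗ, W],[0,1]] : t ∈ ℝ, W ∈ ℝ²}`. -/
theorem sol_lattice_discrete_cocompact
    (A : Matrix (Fin 2) (Fin 2) ℤ) (hdet : A.det = 1) (htr : 2 < A.trace)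
    (B : GL (Fin 2) ℝ) (l : ℝ) (hl : l ≠ 0)
    (hBA : (B : Matrix (Fin 2) (Fin 2) ℝ) * A.map Int.cast *
        ((B⁻¹ : GL (Fin 2) ℝ) : Matrix (Fin 2) (Fin 2) ℝ) =
      !![Real.exp l, 0; 0, Real.exp (-l)])
    (Apow : ℝ → Matrix (Fin 2) (Fin 2) ℝ)
    (hApow : ∀ t : ℝ, Apow t =
      ((B⁻¹ : GL (Fin 2) ℝ) : Matrix (Fin 2) (Fin 2) ℝ) *
        !![Real.exp (t * l), 0; 0, Real.exp (-(t * l))] *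
        (B : Matrix (Fin 2) (Fin 2) ℝ))
    (SA : Set (Matrix (Fin 2 ⊕ Fin 1) (Fin 2 ⊕ Fin 1) ℝ))
    (hSA : SA = {M | ∃ (t : ℝ) (W : Matrix (Fin 2) (Fin 1) ℝ),
      M = Matrix.fromBlocks (Apow t) W 0 1})
    (ΓA : Set (Matrix (Fin 2 ⊕ Fin 1) (Fin 2 ⊕ Fin 1) ℝ))
    (hΓA : ΓA = {M | ∃ (n : ℤ) (Z : Matrix (Fin 2) (Fin 1) ℤ),
      M = Matrix.fromBlocks (Apow (n : ℝ)) (Z.map Int.cast) 0 1}) :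
    ΓA ⊆ SA ∧ DiscreteTopology ↥ΓA ∧
      ∃ K : Set (Matrix (Fin 2 ⊕ Fin 1) (Fin 2 ⊕ Fin 1) ℝ),
        K ⊆ SA ∧ IsCompact K ∧ ∀ g ∈ SA, ∃ k ∈ K, ∃ γ ∈ ΓA, g = k * γ :=
  sol_lattice_discrete_cocompact_general A hdet B l hBA Apow hApow SA hSA ΓA hΓA
end

section
/- If Γ is a discrete subgroup of the solvable group S = ℝ² ⋊ ℝ (Sol), then the projection of Γ to S/[S,S] ≅ ℝ is a discrete subgroup of ℝ. -/
/-!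
The image of `Γ` is a subgroup of `ℝ`, so it suffices that `0` is isolated in it. Suppose instead
that elements `g ∈ Γ` have `t`-coordinates `τ ≠ 0` accumulating at `0`.

If `n ∈ Γ ∩ ℝ²`, the commutator `⁅g, n⁆ = ((e^τ - 1) n.x, (e^{-τ} - 1) n.y, 0)` lies in `Γ` and
tends to `1`, so it is eventually trivial; as `τ ≠ 0` this forces `n = 1`. Hence `Γ ∩ ℝ² = 1`, and
since commutators lie in `ℝ²`, `Γ` is abelian. Fix `a ∈ Γ` with `a.t ≠ 0`: commuting with `a` gives
`(e^{a.t} - 1) g.x = (e^τ - 1) a.x` (and similarly for `y`), so `g → 1`, and discreteness makes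
`g = 1`, contradicting `τ ≠ 0`.
-/

open Real Filter Topology
open scoped commutatorElement

lemma Filter.Tendsto.eventually_eq_of_discreteTopology {X α : Type*} [TopologicalSpace X]
    {s : Set X} [DiscreteTopology s] {x : X} (hx : x ∈ s) {l : Filter α} {f : α → X}
    (hf : Tendsto f l (𝓝 x)) (hfs : ∀ᶠ a in l, f a ∈ s) : ∀ᶠ a in l, f a = x := by
  have h : sᶜ ∈ 𝓝[≠] x := inf_principal_eq_bot.mp (discreteTopology_subtype_iff.mp ‹_› x hx)
  filter_upwards [hf.eventually (eventually_nhdsWithin_iff.mp h), hfs] with a ha has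
  by_contra hne
  exact ha hne has

lemma tendsto_exp_sub_one_mul {α : Type*} {l : Filter α} {f : α → ℝ} (hf : Tendsto f l (𝓝 0))
    (c : ℝ) : Tendsto (fun a => (exp (f a) - 1) * c) l (𝓝 0) := by
  simpa using (((continuous_exp.tendsto 0).comp hf).sub_const 1).mul_const c

lemma exp_sub_one_ne_zero {x : ℝ} (hx : x ≠ 0) : exp x - 1 ≠ 0 :=
  sub_ne_zero.mpr fun h => hx (exp_eq_one_iff x |>.mp h)

lemma Subgroup.commutatorElement_mem {G : Type*} [Group G] (H : Subgroup G) {a b : G}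
    (ha : a ∈ H) (hb : b ∈ H) : ⁅a, b⁆ ∈ H := by
  rw [commutatorElement_def]
  exact mul_mem (mul_mem (mul_mem ha hb) (inv_mem ha)) (inv_mem hb)

namespace Sol

lemma commute_iff {a g : Sol} :
    Commute a g ↔ (exp a.t - 1) * g.x = (exp g.t - 1) * a.x ∧
      (exp (-a.t) - 1) * g.y = (exp (-g.t) - 1) * a.y := by
  rw [Commute, SemiconjBy, Sol.ext_iff]
  simp only [mul_x, mul_y, mul_t, add_comm g.t a.t, and_true]
  constructor <;> rintro ⟨hx, hy⟩ <;> constructor <;> linarith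

lemma x_eq_of_commute {a g : Sol} (h : Commute a g) (ha : a.t ≠ 0) :
    g.x = (exp g.t - 1) * (a.x / (exp a.t - 1)) := by
  rw [← mul_div_assoc, eq_div_iff (exp_sub_one_ne_zero ha), mul_comm g.x]
  exact (commute_iff.mp h).1

lemma y_eq_of_commute {a g : Sol} (h : Commute a g) (ha : a.t ≠ 0) :
    g.y = (exp (-g.t) - 1) * (a.y / (exp (-a.t) - 1)) := by
  rw [← mul_div_assoc, eq_div_iff (exp_sub_one_ne_zero (neg_ne_zero.mpr ha)), mul_comm g.y]
  exact (commute_iff.mp h).2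

@[simp] lemma commutatorElement_t (a g : Sol) : ⁅a, g⁆.t = 0 := by
  simp [commutatorElement_def]

lemma commutatorElement_of_t_eq_zero (g : Sol) {n : Sol} (hn : n.t = 0) :
    ⁅g, n⁆ = ⟨(exp g.t - 1) * n.x, (exp (-g.t) - 1) * n.y, 0⟩ := by
  have he : exp g.t * exp (-g.t) = 1 := by rw [← exp_add, add_neg_cancel, exp_zero]
  ext <;> simp [commutatorElement_def, hn]
  · linear_combination (-g.x) * he
  · linear_combination (-g.y) * he

lemma tendsto_nhds_one_iff {α : Type*} {l : Filter α} {f : α → Sol} :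
    Tendsto f l (𝓝 1) ↔ Tendsto (fun a => (f a).x) l (𝓝 0) ∧
      Tendsto (fun a => (f a).y) l (𝓝 0) ∧ Tendsto (fun a => (f a).t) l (𝓝 0) := by
  rw [(IsInducing.induced fun g : Sol => (g.x, g.y, g.t)).tendsto_nhds_iff, Prod.tendsto_iff,
    Prod.tendsto_iff]
  rfl

def tImage (Γ : Subgroup Sol) : AddSubgroup ℝ where
  carrier := Sol.t '' Γ
  add_mem' := by
    rintro _ _ ⟨a, ha, rfl⟩ ⟨b, hb, rfl⟩
    exact ⟨a * b, mul_mem ha hb, rfl⟩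
  zero_mem' := ⟨1, one_mem Γ, rfl⟩
  neg_mem' := by
    rintro _ ⟨a, ha, rfl⟩
    exact ⟨a⁻¹, inv_mem ha, rfl⟩

section AccumulatingFilter

variable {Γ : Subgroup Sol} [DiscreteTopology Γ] {l : Filter Sol} [l.NeBot]
  (hlΓ : ∀ᶠ g in l, g ∈ Γ) (hlt : Tendsto Sol.t l (𝓝[≠] 0))
include hlΓ hlt

lemma eq_one_of_mem_of_t_eq_zero {n : Sol} (hn : n ∈ Γ) (hnt : n.t = 0) : n = 1 := by
  have ht : Tendsto Sol.t l (𝓝 0) := tendsto_nhds_of_tendsto_nhdsWithin hlt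
  have hneg : Tendsto (fun g : Sol => -g.t) l (𝓝 0) := by simpa using ht.neg
  have hlim : Tendsto (fun g => ⁅g, n⁆) l (𝓝 1) := by
    simp only [tendsto_nhds_one_iff, commutatorElement_of_t_eq_zero _ hnt]
    exact ⟨tendsto_exp_sub_one_mul ht _, tendsto_exp_sub_one_mul hneg _, tendsto_const_nhds⟩
  have hmem : ∀ᶠ g in l, ⁅g, n⁆ ∈ Γ := hlΓ.mono fun g hg => Γ.commutatorElement_mem hg hn
  obtain ⟨g, hg1, hgt⟩ := ((hlim.eventually_eq_of_discreteTopology (one_mem Γ) hmem).and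
    (hlt.eventually self_mem_nhdsWithin)).exists
  obtain ⟨hx, hy⟩ := commute_iff.mp (commutatorElement_eq_one_iff_commute.mp hg1)
  simp only [hnt, neg_zero, exp_zero, sub_self, zero_mul] at hx hy
  have hgt' : -g.t ≠ 0 := neg_ne_zero.mpr hgt
  ext
  · exact (mul_eq_zero.mp hx).resolve_left (exp_sub_one_ne_zero hgt)
  · exact (mul_eq_zero.mp hy).resolve_left (exp_sub_one_ne_zero hgt')
  · exact hnt

lemma false_of_tendsto_t_nhdsNE_zero : False := by
  have ht : Tendsto Sol.t l (𝓝 0) := tendsto_nhds_of_tendsto_nhdsWithin hlt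
  have htne : ∀ᶠ g in l, g.t ≠ 0 := hlt.eventually self_mem_nhdsWithin
  have hcomm : ∀ a ∈ Γ, ∀ g ∈ Γ, Commute a g := fun a ha g hg =>
    commutatorElement_eq_one_iff_commute.mp <| eq_one_of_mem_of_t_eq_zero hlΓ hlt
      (Γ.commutatorElement_mem ha hg) (commutatorElement_t a g)
  obtain ⟨a, ha, hat⟩ := (hlΓ.and htne).exists
  have hlim : Tendsto id l (𝓝 1) := by
    refine tendsto_nhds_one_iff.mpr ⟨?_, ?_, ht⟩
    · refine (tendsto_exp_sub_one_mul ht (a.x / (exp a.t - 1))).congr' ?_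
      filter_upwards [hlΓ] with g hg
      exact (x_eq_of_commute (hcomm a ha g hg) hat).symm
    · refine (tendsto_exp_sub_one_mul (by simpa using ht.neg) (a.y / (exp (-a.t) - 1))).congr' ?_
      filter_upwards [hlΓ] with g hg
      exact (y_eq_of_commute (hcomm a ha g hg) hat).symm
  obtain ⟨g, hg1, hgt⟩ :=
    ((hlim.eventually_eq_of_discreteTopology (one_mem Γ) hlΓ).and htne).exists
  exact hgt (congrArg Sol.t hg1)

end AccumulatingFilter

end Sol

/-- The projection of a discrete subgroup of `Sol` to
`Sol/[Sol,Sol] ≅ ℝ`, `(x,y,t) ↦ t`, has discrete image in `ℝ`. -/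
theorem sol_discrete_projection (Γ : Subgroup Sol) (hΓ : DiscreteTopology Γ) :
    DiscreteTopology ↥{r : ℝ | ∃ g ∈ Γ, Sol.t g = r} := by
  change DiscreteTopology (Sol.tImage Γ)
  apply discreteTopology_of_isOpen_singleton_zero
  rw [isOpen_singleton_iff_punctured_nhds, nhds_ne_subtype_eq_bot_iff, ← not_neBot]
  intro hacc
  let l : Filter Sol := comap Sol.t (𝓝[≠] 0 ⊓ 𝓟 (Sol.t '' Γ)) ⊓ 𝓟 Γ
  have : l.NeBot :=
    comap_inf_principal_neBot_of_image_mem hacc (mem_inf_of_right (mem_principal_self _))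
  exact Sol.false_of_tendsto_t_nhdsNE_zero (l := l) (mem_inf_of_right (mem_principal_self _))
    ((tendsto_comap.mono_left inf_le_left).mono_right inf_le_left)
end

section
/- Every lattice L in the real Heisenberg group H_ℝ is generated by three elements (u,r), (v,s) and the central element (0,0,λ/n), where u,v∈ℝ² are linearly independent with (u,0)×(v,0) = (0,0,λ), r,s ∈ ℝ, and n ∈ ℕ; conversely, any such group is a lattice in H_ℝ. -/
/-- The real Heisenberg group `H_ℝ`: coordinates `(x,y,z)` corresponding to the
upper unitriangular matrix `[[1,x,z],[0,1,y],[0,0,1]]`, with multiplication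
`(x,y,z)(u,v,w) = (x+u, y+v, z+w+x*v)`. -/
@[ext] structure Heisenberg : Type where
  x : ℝ
  y : ℝ
  z : ℝ

namespace Heisenberg

instance : Mul Heisenberg :=
  ⟨fun a b => ⟨a.x + b.x, a.y + b.y, a.z + b.z + a.x * b.y⟩⟩

instance : One Heisenberg := ⟨⟨0, 0, 0⟩⟩

instance : Inv Heisenberg := ⟨fun a => ⟨-a.x, -a.y, -a.z + a.x * a.y⟩⟩

@[simp] lemma mul_x (a b : Heisenberg) : (a * b).x = a.x + b.x := rfl
@[simp] lemma mul_y (a b : Heisenberg) : (a * b).y = a.y + b.y := rfl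
@[simp] lemma mul_z (a b : Heisenberg) : (a * b).z = a.z + b.z + a.x * b.y := rfl
@[simp] lemma one_x : (1 : Heisenberg).x = 0 := rfl
@[simp] lemma one_y : (1 : Heisenberg).y = 0 := rfl
@[simp] lemma one_z : (1 : Heisenberg).z = 0 := rfl
@[simp] lemma inv_x (a : Heisenberg) : (a⁻¹).x = -a.x := rfl
@[simp] lemma inv_y (a : Heisenberg) : (a⁻¹).y = -a.y := rfl
@[simp] lemma inv_z (a : Heisenberg) : (a⁻¹).z = -a.z + a.x * a.y := rfl

instance : Group Heisenberg where
  mul := (· * ·)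
  one := 1
  inv := (·⁻¹)
  mul_assoc a b c := by ext <;> simp <;> ring
  one_mul a := by ext <;> simp
  mul_one a := by ext <;> simp
  inv_mul_cancel a := by ext <;> simp <;> ring

end Heisenberg

/-- Topology on the Heisenberg group, induced from its global coordinates in `ℝ³`. -/
instance : TopologicalSpace Heisenberg :=
  TopologicalSpace.induced (fun g => (g.x, g.y, g.z)) inferInstance

/-!
The projection `g ↦ (g.x, g.y)` is a homomorphism onto `ℝ²` whose kernel is the centre, and the
commutator of `a` and `b` is the central element of height `cross (proj a) (proj b)`.

If `L` is a lattice, cocompactness forces two elements of `L` with independent projections, so `L`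
contains a nonzero central element. Multiplying by its powers moves every element of `L` with small
projection into a fixed compact box, which meets `L` in finitely many points; hence the projection
of `L` is discrete, i.e. a lattice `ℤu ⊕ ℤv` in `ℝ²`. The central part of `L` is a discrete subgroup
of `ℝ`, hence cyclic, and contains `λ = cross u v`, so it is generated by `λ / n` for some `n`.
Lifts of `u` and `v` together with `(0, 0, λ / n)` then generate `L`.

Conversely, each element of the group generated by `A`, `B` and `(0, 0, λ / n)` has the normal form
`A ^ p * B ^ q * (0, 0, m λ / n)`, from which discreteness and a compact fundamental set follow.
-/

section DiscreteSubgroup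

open Filter Topology Set

variable {G : Type*} [Group G] [TopologicalSpace G] [IsTopologicalGroup G]

@[to_additive]
theorem Subgroup.discreteTopology_iff_eventually_eq_one (H : Subgroup G) :
    DiscreteTopology H ↔ ∀ᶠ g in 𝓝 (1 : G), g ∈ H → g = 1 := by
  rw [discreteTopology_iff_isOpen_singleton_one, isOpen_iff_mem_nhds]
  simp only [mem_singleton_iff, forall_eq]
  rw [nhds_subtype_eq_comap, Filter.mem_comap, eventually_iff_exists_mem]
  refine exists_congr fun U => and_congr_right fun _ => ⟨fun h g hg hgH => ?_, fun h g hg => ?_⟩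
  · simpa using congrArg Subtype.val (h (show (⟨g, hgH⟩ : H) ∈ Subtype.val ⁻¹' U from hg))
  · exact Subtype.ext (h g hg g.2)

@[to_additive]
theorem Subgroup.finite_inter_of_isCompact [T2Space G] (H : Subgroup G) [DiscreteTopology H]
    {K : Set G} (hK : IsCompact K) : ((H : Set G) ∩ K).Finite :=
  (hK.inter_left H.isClosed_of_discrete).finite
    ((isDiscrete_iff_discreteTopology.mpr ‹_›).mono inter_subset_left)

end DiscreteSubgroup

theorem AddSubgroup.exists_nat_zmultiples_div_eq {K : Type*} [Field K] [CharZero K] {x c : K}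
    (hx : x ∈ AddSubgroup.zmultiples c) (hx₀ : x ≠ 0) :
    ∃ n : ℕ, 0 < n ∧ AddSubgroup.zmultiples (x / n) = AddSubgroup.zmultiples c := by
  obtain ⟨N, rfl⟩ := AddSubgroup.mem_zmultiples_iff.mp hx
  obtain ⟨n, hN⟩ := Int.eq_nat_or_neg N
  have hn : (n : K) ≠ 0 := by rintro h; rcases hN with rfl | rfl <;> simp_all
  refine ⟨n, Nat.pos_of_ne_zero (by rintro rfl; simp at hn), ?_⟩
  rcases hN with rfl | rfl
  · rw [natCast_zsmul, nsmul_eq_mul, mul_div_cancel_left₀ _ hn]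
  · rw [neg_zsmul, natCast_zsmul, nsmul_eq_mul, neg_div, mul_div_cancel_left₀ _ hn,
      AddSubgroup.zmultiples_neg]

theorem Int.eq_zero_of_abs_zsmul_lt_abs {K : Type*} [Field K] [LinearOrder K]
    [IsStrictOrderedRing K] {m : ℤ} {a : K} (h : |m • a| < |a|) : m = 0 := by
  rw [zsmul_eq_mul, abs_mul] at h
  have ha : 0 < |a| := (mul_nonneg (abs_nonneg _) (abs_nonneg _)).trans_lt h
  exact Int.abs_lt_one_iff.mp (by exact_mod_cast (mul_lt_iff_lt_one_left ha).mp h)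

theorem IsZLattice.exists_zsmul_add_zsmul {E : Type*} [NormedAddCommGroup E] [NormedSpace ℝ E]
    [FiniteDimensional ℝ E] (hE : Module.finrank ℝ E = 2) (P : Submodule ℤ E)
    [DiscreteTopology P] [IsZLattice ℝ P] :
    ∃ u ∈ P, ∃ v ∈ P, ∀ w ∈ P, ∃ p q : ℤ, p • u + q • v = w := by
  have : Module.Finite ℤ P := ZLattice.module_finite ℝ P
  let b := Module.finBasisOfFinrankEq ℤ P ((ZLattice.rank ℝ P).trans hE)
  refine ⟨b 0, (b 0).2, b 1, (b 1).2, fun w hw => ⟨b.repr ⟨w, hw⟩ 0, b.repr ⟨w, hw⟩ 1, ?_⟩⟩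
  have := b.sum_repr ⟨w, hw⟩
  rw [Fin.sum_univ_two] at this
  exact congrArg Subtype.val this

namespace Heisenberg

open Set

def cross (u v : ℝ × ℝ) : ℝ := u.1 * v.2 - u.2 * v.1

lemma cross_zsmul_add_zsmul_left (u v : ℝ × ℝ) (p q : ℤ) :
    cross (p • u + q • v) v = p * cross u v := by
  simp only [cross, Prod.fst_add, Prod.snd_add, Prod.smul_fst, Prod.smul_snd]
  simp only [zsmul_eq_mul]
  ring

lemma cross_zsmul_add_zsmul_right (u v : ℝ × ℝ) (p q : ℤ) :
    cross u (p • u + q • v) = q * cross u v := by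
  simp only [cross, Prod.fst_add, Prod.snd_add, Prod.smul_fst, Prod.smul_snd]
  simp only [zsmul_eq_mul]
  ring

lemma cross_zsmul_add_zsmul (u v : ℝ × ℝ) (p q p' q' : ℤ) :
    cross (p • u + q • v) (p' • u + q' • v) = (p * q' - q * p') * cross u v := by
  simp only [cross, Prod.fst_add, Prod.snd_add, Prod.smul_fst, Prod.smul_snd]
  simp only [zsmul_eq_mul]
  ring

lemma div_cross_smul_add_div_cross_smul {u v : ℝ × ℝ} (h : cross u v ≠ 0) (w : ℝ × ℝ) :
    (cross w v / cross u v) • u + (cross u w / cross u v) • v = w := by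
  ext <;> simp only [Prod.fst_add, Prod.snd_add, Prod.smul_fst, Prod.smul_snd, smul_eq_mul] <;>
    field_simp <;> simp only [cross] <;> ring

lemma span_eq_top_of_cross_ne_zero {S : Set (ℝ × ℝ)} {u v : ℝ × ℝ} (hu : u ∈ S) (hv : v ∈ S)
    (h : cross u v ≠ 0) : Submodule.span ℝ S = ⊤ := by
  refine Submodule.eq_top_iff'.mpr fun w => ?_
  rw [← div_cross_smul_add_div_cross_smul h w]
  exact add_mem (Submodule.smul_mem _ _ (Submodule.subset_span hu))
    (Submodule.smul_mem _ _ (Submodule.subset_span hv))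

lemma cross_add_right (e u v : ℝ × ℝ) : cross e (u + v) = cross e u + cross e v := by
  simp only [cross, Prod.fst_add, Prod.snd_add]
  ring

lemma eq_zero_of_bddAbove_range_cross {e : ℝ × ℝ} (h : BddAbove (range (cross e))) : e = 0 := by
  by_contra he
  obtain ⟨M, hM⟩ := h
  have hq : 0 < e.1 ^ 2 + e.2 ^ 2 := by
    rcases e with ⟨e₁, e₂⟩
    have : e₁ ≠ 0 ∨ e₂ ≠ 0 := by contrapose! he; simp [he]
    rcases this with h | h <;> positivity
  have := hM (mem_range_self (((M + 1) / (e.1 ^ 2 + e.2 ^ 2)) • (-e.2, e.1)))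
  simp only [cross, Prod.smul_fst, Prod.smul_snd, smul_eq_mul] at this
  field_simp at this
  linarith

def coords : Heisenberg ≃ₜ ℝ × ℝ × ℝ where
  toFun g := (g.x, g.y, g.z)
  invFun t := ⟨t.1, t.2.1, t.2.2⟩
  left_inv _ := rfl
  right_inv _ := rfl
  continuous_toFun := continuous_induced_dom
  continuous_invFun := continuous_induced_rng.2 continuous_id

@[fun_prop]
lemma continuous_x : Continuous x := continuous_fst.comp coords.continuous

@[fun_prop]
lemma continuous_y : Continuous y := continuous_fst.comp (continuous_snd.comp coords.continuous)

@[fun_prop]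
lemma continuous_z : Continuous z := continuous_snd.comp (continuous_snd.comp coords.continuous)

@[fun_prop]
lemma continuous_mk {α : Type*} [TopologicalSpace α] {f g h : α → ℝ}
    (hf : Continuous f) (hg : Continuous g) (hh : Continuous h) :
    Continuous fun a => (⟨f a, g a, h a⟩ : Heisenberg) :=
  coords.symm.continuous.comp (hf.prodMk (hg.prodMk hh))

instance : T2Space Heisenberg := coords.isEmbedding.t2Space

instance : IsTopologicalGroup Heisenberg where
  continuous_mul := by
    show Continuous fun p : Heisenberg × Heisenberg =>
      (⟨p.1.x + p.2.x, p.1.y + p.2.y, p.1.z + p.2.z + p.1.x * p.2.y⟩ : Heisenberg)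
    fun_prop
  continuous_inv := by
    show Continuous fun g : Heisenberg => (⟨-g.x, -g.y, -g.z + g.x * g.y⟩ : Heisenberg)
    fun_prop

def proj (g : Heisenberg) : ℝ × ℝ := (g.x, g.y)

def central (t : ℝ) : Heisenberg := ⟨0, 0, t⟩

@[fun_prop]
lemma continuous_proj : Continuous proj := by unfold proj; fun_prop

@[fun_prop]
lemma continuous_central : Continuous central := by unfold central; fun_prop

@[simp] lemma fst_proj (g : Heisenberg) : (proj g).1 = g.x := rfl
@[simp] lemma snd_proj (g : Heisenberg) : (proj g).2 = g.y := rfl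
@[simp] lemma proj_mul (a b : Heisenberg) : proj (a * b) = proj a + proj b := rfl
@[simp] lemma proj_one : proj 1 = 0 := rfl
@[simp] lemma proj_inv (a : Heisenberg) : proj a⁻¹ = -proj a := rfl
@[simp] lemma proj_central (t : ℝ) : proj (central t) = 0 := rfl
@[simp] lemma central_x (t : ℝ) : (central t).x = 0 := rfl
@[simp] lemma central_y (t : ℝ) : (central t).y = 0 := rfl
@[simp] lemma central_z (t : ℝ) : (central t).z = t := rfl
@[simp] lemma central_zero : central 0 = 1 := rfl

lemma proj_zpow (a : Heisenberg) (m : ℤ) : proj (a ^ m) = m • proj a := by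
  induction m using Int.induction_on with
  | zero => simp
  | succ k ih => rw [zpow_add_one, proj_mul, ih, add_smul, one_smul]
  | pred k ih => rw [zpow_sub_one, proj_mul, proj_inv, ih, sub_smul, one_smul, sub_eq_add_neg]

lemma zpow_x (a : Heisenberg) (m : ℤ) : (a ^ m).x = m * a.x := by
  simpa using congrArg Prod.fst (proj_zpow a m)

lemma zpow_y (a : Heisenberg) (m : ℤ) : (a ^ m).y = m * a.y := by
  simpa using congrArg Prod.snd (proj_zpow a m)

lemma zpow_z (a : Heisenberg) (m : ℤ) :
    (a ^ m).z = m * a.z + m * (m - 1) / 2 * (a.x * a.y) := by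
  induction m using Int.induction_on with
  | zero => simp
  | succ k ih => rw [zpow_add_one, mul_z, ih, zpow_x]; push_cast; ring
  | pred k ih => rw [zpow_sub_one, mul_z, ih, zpow_x, inv_y, inv_z]; push_cast; ring

lemma eq_central_of_proj_eq_zero {g : Heisenberg} (h : proj g = 0) : g = central g.z := by
  ext
  · exact congrArg Prod.fst h
  · exact congrArg Prod.snd h
  · rfl

lemma central_mul_central (s t : ℝ) : central s * central t = central (s + t) := by
  ext <;> simp [central]

@[simp] lemma inv_central (t : ℝ) : (central t)⁻¹ = central (-t) := by
  ext <;> simp [central]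

lemma central_zpow (t : ℝ) (m : ℤ) : central t ^ m = central (m • t) := by
  induction m using Int.induction_on with
  | zero => simp
  | succ k ih => rw [zpow_add_one, ih, central_mul_central, add_smul, one_smul]
  | pred k ih =>
    rw [zpow_sub_one, ih, inv_central, central_mul_central, sub_smul, one_smul, sub_eq_add_neg]

lemma central_mul_comm (t : ℝ) (g : Heisenberg) : central t * g = g * central t := by
  ext <;> simp [central, add_comm]

lemma commutator_eq_central (a b : Heisenberg) :
    a * b * a⁻¹ * b⁻¹ = central (cross (proj a) (proj b)) := by
  ext <;> simp [central, cross]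
  ring

def centralPeriods (L : Subgroup Heisenberg) : AddSubgroup ℝ where
  carrier := {t | central t ∈ L}
  zero_mem' := L.one_mem
  add_mem' {s t} hs ht := show central (s + t) ∈ L from central_mul_central s t ▸ mul_mem hs ht
  neg_mem' {t} ht := show central (-t) ∈ L from inv_central t ▸ inv_mem ht

def projection (L : Subgroup Heisenberg) : Submodule ℤ (ℝ × ℝ) where
  carrier := proj '' L
  zero_mem' := ⟨1, L.one_mem, proj_one⟩
  add_mem' := by
    rintro _ _ ⟨a, ha, rfl⟩ ⟨b, hb, rfl⟩
    exact ⟨a * b, mul_mem ha hb, proj_mul a b⟩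
  smul_mem' := by
    rintro m _ ⟨a, ha, rfl⟩
    exact ⟨a ^ m, zpow_mem ha m, proj_zpow a m⟩

lemma exists_centralPeriods_eq_zmultiples {L : Subgroup Heisenberg} [DiscreteTopology L] :
    ∃ c, centralPeriods L = AddSubgroup.zmultiples c := by
  have : DiscreteTopology (centralPeriods L) := by
    rw [AddSubgroup.discreteTopology_iff_eventually_eq_zero]
    filter_upwards [continuous_central.tendsto 0
      ((Subgroup.discreteTopology_iff_eventually_eq_one L).mp ‹_›)] with t ht htL
    simpa [central] using congrArg z (ht htL)
  obtain ⟨c, hc⟩ := (centralPeriods L).isAddCyclic_iff_exists_zmultiples_eq_top.mp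
    (AddSubgroup.discrete_iff_addCyclic.mpr this)
  exact ⟨c, hc.symm⟩

section NormalForm

variable (A B : Heisenberg)

lemma normalForm_mul (p q p' q' : ℤ) (s s' : ℝ) :
    A ^ p * B ^ q * central s * (A ^ p' * B ^ q' * central s') =
      A ^ (p + p') * B ^ (q + q') * central (s + s' - q * p' * cross (proj A) (proj B)) := by
  ext <;> simp [central, cross, zpow_x, zpow_y, zpow_z] <;> ring

lemma normalForm_inv (p q : ℤ) (s : ℝ) :
    (A ^ p * B ^ q * central s)⁻¹ =
      A ^ (-p) * B ^ (-q) * central (-s - q * p * cross (proj A) (proj B)) := by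
  ext <;> simp [central, cross, zpow_x, zpow_y, zpow_z] <;> ring

lemma proj_normalForm (p q : ℤ) (s : ℝ) :
    proj (A ^ p * B ^ q * central s) = p • proj A + q • proj B := by
  simp [proj_zpow]

lemma normalForm_mem_closure (μ : ℝ) (p q m : ℤ) :
    A ^ p * B ^ q * central (m • μ) ∈ Subgroup.closure {A, B, central μ} := by
  rw [← central_zpow]
  refine mul_mem (mul_mem (zpow_mem ?_ p) (zpow_mem ?_ q)) (zpow_mem ?_ m) <;>
    exact Subgroup.subset_closure (by simp)

variable {A B}

lemma exists_normalForm_of_mem_closure {μ : ℝ} {n : ℤ} (hμ : cross (proj A) (proj B) = n * μ)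
    {g : Heisenberg} (hg : g ∈ Subgroup.closure {A, B, central μ}) :
    ∃ p q m : ℤ, g = A ^ p * B ^ q * central (m • μ) := by
  induction hg using Subgroup.closure_induction with
  | mem g hg =>
    rcases hg with rfl | rfl | rfl
    · exact ⟨1, 0, 0, by simp⟩
    · exact ⟨0, 1, 0, by simp⟩
    · exact ⟨0, 0, 1, by simp⟩
  | one => exact ⟨0, 0, 0, by simp⟩
  | mul g h _ _ hg hh =>
    obtain ⟨p, q, m, rfl⟩ := hg
    obtain ⟨p', q', m', rfl⟩ := hh
    refine ⟨p + p', q + q', m + m' - q * p' * n, ?_⟩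
    rw [normalForm_mul, hμ]
    congr 2
    simp only [zsmul_eq_mul]; push_cast; ring
  | inv g _ hg =>
    obtain ⟨p, q, m, rfl⟩ := hg
    refine ⟨-p, -q, -m - q * p * n, ?_⟩
    rw [normalForm_inv, hμ]
    congr 2
    simp only [zsmul_eq_mul]; push_cast; ring

end NormalForm

section Generated

variable {A B : Heisenberg} {n : ℕ}

lemma discreteTopology_closure (hcross : cross (proj A) (proj B) ≠ 0) (hn : 0 < n) :
    DiscreteTopology (Subgroup.closure {A, B, central (cross (proj A) (proj B) / n)}) := by
  rw [Subgroup.discreteTopology_iff_eventually_eq_one]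
  have hα : Continuous fun g => |cross (proj g) (proj B) / cross (proj A) (proj B)| := by
    unfold cross; fun_prop
  have hβ : Continuous fun g => |cross (proj A) (proj g) / cross (proj A) (proj B)| := by
    unfold cross; fun_prop
  filter_upwards [hα.continuousAt.eventually_lt (continuousAt_const (y := 1)) (by simp [cross]),
    hβ.continuousAt.eventually_lt (continuousAt_const (y := 1)) (by simp [cross]),
    continuous_z.abs.continuousAt.eventually_lt
      (continuousAt_const (y := |cross (proj A) (proj B) / n|))
      (by simp [hcross, hn.ne'])] with g hgα hgβ hgz hg
  obtain ⟨p, q, m, rfl⟩ :=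
    exists_normalForm_of_mem_closure (n := n) (by push_cast; field_simp) hg
  simp only [proj_normalForm, cross_zsmul_add_zsmul_left, cross_zsmul_add_zsmul_right,
    mul_div_cancel_right₀ _ hcross] at hgα hgβ
  obtain rfl : p = 0 := Int.abs_lt_one_iff.mp (by exact_mod_cast hgα)
  obtain rfl : q = 0 := Int.abs_lt_one_iff.mp (by exact_mod_cast hgβ)
  obtain rfl : m = 0 := Int.eq_zero_of_abs_zsmul_lt_abs
    (a := cross (proj A) (proj B) / n) (by simpa using hgz)
  simp

lemma exists_isCompact_mul_closure (hcross : cross (proj A) (proj B) ≠ 0) (hn : 0 < n) :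
    ∃ K : Set Heisenberg, IsCompact K ∧ ∀ g : Heisenberg, ∃ k ∈ K,
      ∃ γ ∈ Subgroup.closure {A, B, central (cross (proj A) (proj B) / n)}, g = k * γ := by
  set l := cross (proj A) (proj B)
  set μ := l / n
  let box : ℝ × ℝ × ℝ → Heisenberg := fun t =>
    ⟨t.1 * A.x + t.2.1 * B.x, t.1 * A.y + t.2.1 * B.y, t.2.2 * μ⟩
  refine ⟨box '' (unitInterval ×ˢ unitInterval ×ˢ unitInterval),
    (isCompact_Icc.prod (isCompact_Icc.prod isCompact_Icc)).image (by fun_prop), fun g => ?_⟩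
  set α := cross (proj g) (proj B) / l
  set β := cross (proj A) (proj g) / l
  have hαβ := div_cross_smul_add_div_cross_smul hcross (proj g)
  set γ₀ := A ^ ⌊α⌋ * B ^ ⌊β⌋
  set w := (g * γ₀⁻¹).z
  set γ := γ₀ * central (⌊w / μ⌋ • μ)
  refine ⟨g * γ⁻¹, ⟨(Int.fract α, Int.fract β, Int.fract (w / μ)),
    ⟨unitInterval.fract_mem _, unitInterval.fract_mem _, unitInterval.fract_mem _⟩, ?_⟩, γ,
    normalForm_mem_closure A B μ _ _ _, (inv_mul_cancel_right g γ).symm⟩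
  · have hμ : μ ≠ 0 := div_ne_zero hcross (by simp [hn.ne'])
    have hx : α * A.x + β * B.x = g.x := by simpa using congrArg Prod.fst hαβ
    have hy : α * A.y + β * B.y = g.y := by simpa using congrArg Prod.snd hαβ
    rw [mul_inv_rev, inv_central, central_mul_comm, ← mul_assoc]
    ext
    · simp [box, γ₀, zpow_x]
      unfold Int.fract
      linear_combination hx
    · simp [box, γ₀, zpow_y]
      unfold Int.fract
      linear_combination hy
    · simp [box, w]
      unfold Int.fract
      field_simp
      ring

end Generated

section Lattice

variable {L : Subgroup Heisenberg}

lemma exists_cross_ne_zero {K : Set Heisenberg} (hK : IsCompact K)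
    (hcov : ∀ g : Heisenberg, ∃ k ∈ K, ∃ γ ∈ L, g = k * γ) :
    ∃ a ∈ L, ∃ b ∈ L, cross (proj a) (proj b) ≠ 0 := by
  by_contra! h
  obtain ⟨e, he, heL⟩ : ∃ e : ℝ × ℝ, e ≠ 0 ∧ ∀ γ ∈ L, cross e (proj γ) = 0 := by
    by_cases h0 : ∃ γ₀ ∈ L, proj γ₀ ≠ 0
    · obtain ⟨γ₀, hγ₀, hne⟩ := h0
      exact ⟨proj γ₀, hne, h γ₀ hγ₀⟩
    · push Not at h0
      exact ⟨(1, 0), by simp, fun γ hγ => by simp [h0 γ hγ, cross]⟩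
  -- `cross e ∘ proj` is right `L`-invariant, so its values on all of `Heisenberg` are those on `K`.
  have hcont : Continuous fun g => cross e (proj g) := by unfold cross; fun_prop
  refine he (eq_zero_of_bddAbove_range_cross ((hK.bddAbove_image hcont.continuousOn).mono ?_))
  rintro _ ⟨w, rfl⟩
  obtain ⟨k, hk, γ, hγ, hkγ⟩ := hcov ⟨w.1, w.2, 0⟩
  refine ⟨k, hk, ?_⟩
  simp only [show w = proj (k * γ) from congrArg proj hkγ, proj_mul, cross_add_right, heL γ hγ,
    add_zero]

lemma discreteTopology_projection [DiscreteTopology L] {c : ℝ} (hc : c ≠ 0)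
    (hcL : central c ∈ L) : DiscreteTopology (projection L) := by
  let box : ℝ × ℝ × ℝ → Heisenberg := fun t => ⟨t.1, t.2.1, t.2.2 * c⟩
  have hF : ((L : Set Heisenberg) ∩ box '' (Icc (-1) 1 ×ˢ Icc (-1) 1 ×ˢ unitInterval)).Finite :=
    L.finite_inter_of_isCompact
      ((isCompact_Icc.prod (isCompact_Icc.prod isCompact_Icc)).image (by fun_prop))
  change DiscreteTopology (projection L).toAddSubgroup
  rw [AddSubgroup.discreteTopology_iff_eventually_eq_zero]
  filter_upwards [prod_mem_nhds (Icc_mem_nhds (by norm_num : (-1 : ℝ) < 0) one_pos)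
      (Icc_mem_nhds (by norm_num : (-1 : ℝ) < 0) one_pos),
    ((hF.image proj).sdiff (t := {0})).isClosed.compl_mem_nhds (by simp)]
    with w hw hwF hwL
  obtain ⟨γ, hγ, rfl⟩ := hwL
  by_contra hne
  refine hwF ⟨⟨γ * central (-⌊γ.z / c⌋ • c), ⟨mul_mem hγ ?_, ?_⟩, by simp⟩, hne⟩
  · rw [← central_zpow]
    exact zpow_mem hcL _
  · refine ⟨(γ.x, γ.y, Int.fract (γ.z / c)), ⟨hw.1, hw.2, unitInterval.fract_mem _⟩, ?_⟩
    ext <;> simp [box]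
    unfold Int.fract
    field_simp
    ring

lemma eq_closure_of_forall_proj_eq {a b : Heisenberg} {μ : ℝ} (ha : a ∈ L) (hb : b ∈ L)
    (hμ : central μ ∈ L) (hproj : ∀ γ ∈ L, ∃ p q : ℤ, p • proj a + q • proj b = proj γ)
    (hcentral : centralPeriods L ≤ AddSubgroup.zmultiples μ) :
    L = Subgroup.closure {a, b, central μ} := by
  refine le_antisymm (fun γ hγ => ?_) ((Subgroup.closure_le L).mpr ?_)
  · obtain ⟨p, q, hpq⟩ := hproj γ hγ
    set h := (a ^ p * b ^ q)⁻¹ * γ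
    have hhL : h ∈ L := mul_mem (inv_mem (mul_mem (zpow_mem ha p) (zpow_mem hb q))) hγ
    have hh : h = central h.z := eq_central_of_proj_eq_zero (by
      rw [proj_mul, proj_inv, proj_mul, proj_zpow, proj_zpow, hpq, neg_add_cancel])
    obtain ⟨m, hm⟩ := AddSubgroup.mem_zmultiples_iff.mp
      (hcentral (show central h.z ∈ L from hh ▸ hhL))
    have : γ = a ^ p * b ^ q * central (m • μ) := by rw [hm, ← hh, mul_inv_cancel_left]
    exact this ▸ normalForm_mem_closure a b μ p q m
  · rintro _ (rfl | rfl | rfl) <;> assumption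

lemma central_cross_mem {a b : Heisenberg} (ha : a ∈ L) (hb : b ∈ L) :
    central (cross (proj a) (proj b)) ∈ L :=
  commutator_eq_central a b ▸ mul_mem (mul_mem (mul_mem ha hb) (inv_mem ha)) (inv_mem hb)

theorem exists_generators_of_cocompact [DiscreteTopology L] {K : Set Heisenberg}
    (hK : IsCompact K) (hcov : ∀ g : Heisenberg, ∃ k ∈ K, ∃ γ ∈ L, g = k * γ) :
    ∃ a ∈ L, ∃ b ∈ L, ∃ n : ℕ, 0 < n ∧ cross (proj a) (proj b) ≠ 0 ∧
      L = Subgroup.closure {a, b, central (cross (proj a) (proj b) / n)} := by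
  obtain ⟨a₀, ha₀, b₀, hb₀, hcross₀⟩ := exists_cross_ne_zero hK hcov
  have := discreteTopology_projection hcross₀ (central_cross_mem ha₀ hb₀)
  have : IsZLattice ℝ (projection L) :=
    ⟨span_eq_top_of_cross_ne_zero ⟨a₀, ha₀, rfl⟩ ⟨b₀, hb₀, rfl⟩ hcross₀⟩
  obtain ⟨_, ⟨a, ha, rfl⟩, _, ⟨b, hb, rfl⟩, hgen⟩ :=
    IsZLattice.exists_zsmul_add_zsmul (by simp) (projection L)
  have hproj : ∀ γ ∈ L, ∃ p q : ℤ, p • proj a + q • proj b = proj γ :=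
    fun γ hγ => hgen _ ⟨γ, hγ, rfl⟩
  have hcross : cross (proj a) (proj b) ≠ 0 := by
    obtain ⟨p, q, hpq⟩ := hproj a₀ ha₀
    obtain ⟨p', q', hpq'⟩ := hproj b₀ hb₀
    refine fun h => hcross₀ ?_
    rw [← hpq, ← hpq', cross_zsmul_add_zsmul, h, mul_zero]
  obtain ⟨c, hc⟩ := exists_centralPeriods_eq_zmultiples (L := L)
  obtain ⟨n, hn, hμ⟩ := AddSubgroup.exists_nat_zmultiples_div_eq
    (show _ ∈ AddSubgroup.zmultiples c from hc ▸ central_cross_mem ha hb) hcross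
  rw [← hμ] at hc
  exact ⟨a, ha, b, hb, n, hn, hcross,
    eq_closure_of_forall_proj_eq ha hb (hc.ge (AddSubgroup.mem_zmultiples _)) hproj hc.le⟩

end Lattice

end Heisenberg

/-- A subgroup `L ≤ H_ℝ` is a lattice (discrete with finite-covolume
quotient; equivalently, since `H_ℝ` is nilpotent, discrete and cocompact) if and only if
it is generated by elements `(u,r)`, `(v,s)` and the central element `(0,0,λ/n)`, where
`u, v ∈ ℝ²` are linearly independent, `λ = det(u,v)` (the `z`-component of the cross
product `(u,0) × (v,0)`), `r, s ∈ ℝ` and `n ∈ ℕ` is positive. -/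
theorem heisenberg_lattice_characterization (L : Subgroup Heisenberg) :
    (DiscreteTopology L ∧
      ∃ K : Set Heisenberg, IsCompact K ∧ ∀ g : Heisenberg, ∃ k ∈ K, ∃ γ ∈ L, g = k * γ)
    ↔ ∃ (u v : ℝ × ℝ) (r s : ℝ) (n : ℕ), 0 < n ∧ u.1 * v.2 - u.2 * v.1 ≠ 0 ∧
        L = Subgroup.closure
          {⟨u.1, u.2, r⟩, ⟨v.1, v.2, s⟩, ⟨0, 0, (u.1 * v.2 - u.2 * v.1) / n⟩} := by
  constructor
  · rintro ⟨_, K, hK, hcov⟩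
    obtain ⟨a, -, b, -, n, hn, hcross, hL⟩ := Heisenberg.exists_generators_of_cocompact hK hcov
    exact ⟨Heisenberg.proj a, Heisenberg.proj b, a.z, b.z, n, hn, hcross, hL⟩
  · rintro ⟨u, v, r, s, n, hn, hcross, rfl⟩
    exact ⟨Heisenberg.discreteTopology_closure (A := ⟨u.1, u.2, r⟩) (B := ⟨v.1, v.2, s⟩)
      hcross hn, Heisenberg.exists_isCompact_mul_closure hcross hn⟩
end

section
/- Let Γ be a subgroup of PSL₂(ℝ) having the identity as an accumulation point (i.e., Γ is not discrete), and let Λ ⊆ Γ be a nontrivial normal discrete subgroup. Then Λ is cyclic and Γ contains a commutative subgroup of finite index. -/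
abbrev SL2R := Matrix.SpecialLinearGroup (Fin 2) ℝ

/-- The topology on `SL₂(ℝ)`, induced from the space of matrices. -/
instance : TopologicalSpace SL2R :=
  TopologicalSpace.induced (fun A => (A : Matrix (Fin 2) (Fin 2) ℝ)) inferInstance

/-- `PSL₂(ℝ) = SL₂(ℝ)/{±1}`, with the quotient topology. -/
abbrev PSL2R := SL2R ⧸ Subgroup.center SL2R

/-!
Conjugation by an element `γ ∈ Γ` close to `1` moves each element of the discrete group `Λ` only
slightly, so it fixes it; hence any two elements of `Λ` commute with a common `γ ≠ 1`. In `PSL₂(ℝ)`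
the centralizer of a nontrivial element lies in the image of a continuous homomorphism `ℝ → PSL₂(ℝ)`
(elliptic, parabolic or hyperbolic according to the sign of the discriminant). So `Λ` is abelian,
then a discrete subgroup of such a one-parameter group, hence cyclic. Finally `Γ` acts on `Λ` by
conjugation through the finite group `Aut Λ`, and the kernel of this action, the centralizer of `Λ`
in `Γ`, is commutative because it centralizes a nontrivial element of `Λ`.
-/

open Filter Topology Matrix

section

variable {G : Type*} [Group G]

theorem le_normalizer_of_conj_mem {Γ Λ : Subgroup G}
    (h : ∀ γ ∈ Γ, ∀ l ∈ Λ, γ * l * γ⁻¹ ∈ Λ) : Γ ≤ Subgroup.normalizer (Λ : Set G) := by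
  intro γ hγ
  refine Subgroup.mem_normalizer_iff.mpr fun l => ⟨h γ hγ l, fun hl => ?_⟩
  simpa [mul_assoc] using h γ⁻¹ (Γ.inv_mem hγ) _ hl

theorem finiteIndex_centralizer_subgroupOf {Γ Λ : Subgroup G} [IsCyclic Λ]
    (hΓ : Γ ≤ Subgroup.normalizer (Λ : Set G)) :
    ((Subgroup.centralizer Λ).subgroupOf Γ).FiniteIndex := by
  have : Finite (MulAut Λ) := .of_equiv _ (IsCyclic.mulAutMulEquiv Λ).symm.toEquiv
  have hker : (Λ.normalizerMonoidHom.comp (Subgroup.inclusion hΓ)).ker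
      = (Subgroup.centralizer Λ).subgroupOf Γ := by
    ext γ
    simp [Subgroup.mem_subgroupOf, Subgroup.mem_centralizer_iff, DFunLike.ext_iff,
      Subtype.ext_iff, eq_mul_inv_iff_mul_eq, eq_comm]
  rw [← hker]
  exact Subgroup.finiteIndex_ker _

end

section

variable {G : Type*} [Group G] [TopologicalSpace G] [IsTopologicalGroup G]

theorem eventually_commute_of_discrete {Γ Λ : Subgroup G} [DiscreteTopology Λ]
    (hΓ : Γ ≤ Subgroup.normalizer (Λ : Set G)) {l : G} (hl : l ∈ Λ) :
    ∀ᶠ γ in 𝓝[Γ] (1 : G), Commute γ l := by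
  obtain ⟨U, hU, hUΛ⟩ := discreteTopology_subtype_iff'.mp ‹_› l hl
  have hconj : Tendsto (fun γ : G => γ * l * γ⁻¹) (𝓝 1) (𝓝 l) :=
    (by fun_prop : Continuous fun γ : G => γ * l * γ⁻¹).tendsto' 1 l (by simp)
  filter_upwards [nhdsWithin_le_nhds (hconj (hU.mem_nhds ((Set.ext_iff.mp hUΛ l).mpr rfl).1)),
    self_mem_nhdsWithin] with γ hγU hγΓ
  have : γ * l * γ⁻¹ ∈ U ∩ (Λ : Set G) := ⟨hγU, (Subgroup.mem_normalizer_iff.mp (hΓ hγΓ) l).mp hl⟩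
  rw [hUΛ] at this
  exact mul_inv_eq_iff_eq_mul.mp this

theorem exists_ne_one_commute_of_discrete {Γ Λ : Subgroup G} [DiscreteTopology Λ]
    (hacc : (1 : G) ∈ closure ((Γ : Set G) \ {1})) (hΓ : Γ ≤ Subgroup.normalizer (Λ : Set G))
    {l μ : G} (hl : l ∈ Λ) (hμ : μ ∈ Λ) : ∃ γ ≠ 1, Commute γ l ∧ Commute γ μ := by
  have := mem_closure_iff_nhdsWithin_neBot.mp hacc
  have hmono : 𝓝[(Γ : Set G) \ {1}] (1 : G) ≤ 𝓝[Γ] 1 := nhdsWithin_mono _ Set.sdiff_subset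
  obtain ⟨γ, hγ, hγl, hγμ⟩ := ((eventually_mem_nhdsWithin).and
    (hmono ((eventually_commute_of_discrete hΓ hl).and
      (eventually_commute_of_discrete hΓ hμ)))).exists
  exact ⟨γ, hγ.2, hγl, hγμ⟩

end

section

variable {G : Type*} [Group G] [TopologicalSpace G] [T1Space G] {ψ : Multiplicative ℝ →* G}
  {Λ : Subgroup G} [DiscreteTopology Λ]

theorem ker_eq_top_of_dense_comap (hψ : Continuous ψ)
    (hdense : Dense ((Λ.comap ψ : Subgroup (Multiplicative ℝ)) : Set (Multiplicative ℝ))) :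
    ψ.ker = ⊤ := by
  obtain ⟨U, hU, hUΛ⟩ := discreteTopology_subtype_iff'.mp ‹_› 1 Λ.one_mem
  have hV : IsOpen (ψ ⁻¹' U) := hU.preimage hψ
  have hVΛ : ψ ⁻¹' U ∩ Λ.comap ψ ⊆ ψ.ker := fun x hx => by
    have : ψ x ∈ U ∩ (Λ : Set G) := hx
    rwa [hUΛ] at this
  have hclosed : IsClosed (ψ.ker : Set (Multiplicative ℝ)) := isClosed_singleton.preimage hψ
  have hopen : IsOpen (ψ.ker : Set (Multiplicative ℝ)) := by
    refine Subgroup.isOpen_of_mem_nhds (g := 1) _ (mem_of_superset (hV.mem_nhds ?_) ?_)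
    · simpa using ((Set.ext_iff.mp hUΛ 1).mpr rfl).1
    · exact (hdense.open_subset_closure_inter hV).trans (closure_minimal hVΛ hclosed)
  have : PreconnectedSpace (Multiplicative ℝ) := inferInstanceAs (PreconnectedSpace ℝ)
  exact SetLike.coe_injective <| (isClopen_iff.mp ⟨hclosed, hopen⟩).resolve_left
    (Set.nonempty_of_mem ψ.ker.one_mem).ne_empty

theorem isCyclic_of_le_range (hψ : Continuous ψ) (hΛ : Λ ≤ ψ.range) : IsCyclic Λ := by
  rcases AddSubgroup.dense_or_cyclic (Subgroup.toAddSubgroup' (Λ.comap ψ)) with hdense | ⟨a, ha⟩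
  · rw [MonoidHom.ker_eq_top_iff.mp (ker_eq_top_of_dense_comap hψ hdense),
      MonoidHom.range_one] at hΛ
    have : Subsingleton Λ := ⟨fun x y => Subtype.ext
      ((Subgroup.mem_bot.mp (hΛ x.2)).trans (Subgroup.mem_bot.mp (hΛ y.2)).symm)⟩
    infer_instance
  · have : Λ.comap ψ = Subgroup.zpowers (Multiplicative.ofAdd a) := by
      apply Subgroup.toAddSubgroup'.injective
      rw [ha, Subgroup.zpowers_eq_closure, Subgroup.toAddSubgroup'_closure]
      rfl
    rw [← Subgroup.map_comap_eq_self hΛ]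
    exact isCyclic_of_surjective _ (ψ.subgroupMap_surjective _) (hH := this ▸ inferInstance)

end

section

variable {K : Type*} [Field K]

theorem exists_eq_mul_of_minors_eq_zero {u₁ u₂ u₃ v₁ v₂ v₃ : K}
    (hu : u₁ ≠ 0 ∨ u₂ ≠ 0 ∨ u₃ ≠ 0) (h₁₂ : u₁ * v₂ = v₁ * u₂) (h₁₃ : u₁ * v₃ = v₁ * u₃)
    (h₂₃ : u₂ * v₃ = v₂ * u₃) : ∃ y, v₁ = y * u₁ ∧ v₂ = y * u₂ ∧ v₃ = y * u₃ := by
  rcases hu with h | h | h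
  · exact ⟨v₁ / u₁, by field_simp, by field_simp; linear_combination h₁₂,
      by field_simp; linear_combination h₁₃⟩
  · exact ⟨v₂ / u₂, by field_simp; linear_combination -h₁₂, by field_simp,
      by field_simp; linear_combination h₂₃⟩
  · exact ⟨v₃ / u₃, by field_simp; linear_combination -h₁₃, by field_simp; linear_combination -h₂₃,
      by field_simp⟩

theorem Matrix.exists_eq_smul_one_add_smul_of_commute {A B : Matrix (Fin 2) (Fin 2) K}
    (hA : ∀ r : K, A ≠ r • 1) (h : Commute A B) : ∃ x y : K, B = x • 1 + y • A := by
  have hentry (i j) := congrFun₂ h.eq i j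
  simp only [mul_apply, Fin.sum_univ_two] at hentry
  have hA' : A 0 1 ≠ 0 ∨ A 1 0 ≠ 0 ∨ A 0 0 - A 1 1 ≠ 0 := by
    by_contra! h0
    refine hA (A 0 0) (Matrix.ext fun i j => ?_)
    fin_cases i <;> fin_cases j <;> simp [h0.1, h0.2.1]
    linear_combination -h0.2.2
  obtain ⟨y, h01, h10, hdiag⟩ := exists_eq_mul_of_minors_eq_zero hA'
    (v₁ := B 0 1) (v₂ := B 1 0) (v₃ := B 0 0 - B 1 1)
    (by linear_combination hentry 0 0) (by linear_combination -hentry 0 1)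
    (by linear_combination hentry 1 0)
  refine ⟨B 0 0 - y * A 0 0, y, Matrix.ext fun i j => ?_⟩
  fin_cases i <;> fin_cases j <;> simp [h01, h10]
  linear_combination -hdiag

theorem Matrix.trace_eq_zero_of_mul_eq_neg_mul [NeZero (2 : K)] {n : Type*} [Fintype n]
    [DecidableEq n] {A B : Matrix n n K} (hB : IsUnit B.det) (h : A * B = -(B * A)) :
    A.trace = 0 := by
  have : A.trace = -A.trace := calc
    A.trace = (A * B * B⁻¹).trace := by rw [Matrix.mul_nonsing_inv_cancel_right _ _ hB]
    _ = (B⁻¹ * (A * B)).trace := Matrix.trace_mul_comm _ _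
    _ = -A.trace := by rw [h, Matrix.mul_neg, Matrix.nonsing_inv_mul_cancel_left _ _ hB,
      Matrix.trace_neg]
  have h2 : (2 : K) * A.trace = 0 := by linear_combination this
  exact (mul_eq_zero.mp h2).resolve_left two_ne_zero

end

theorem Matrix.mul_ne_neg_mul_of_det_pos {K : Type*} [Field K] [LinearOrder K]
    [IsStrictOrderedRing K] {A B : Matrix (Fin 2) (Fin 2) K} (hA : 0 < A.det) (hB : 0 < B.det) :
    A * B ≠ -(B * A) := by
  intro h
  have htrA := trace_eq_zero_of_mul_eq_neg_mul hB.ne'.isUnit h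
  have htrB := trace_eq_zero_of_mul_eq_neg_mul hA.ne'.isUnit (by rw [h, neg_neg])
  have h00 := congrFun₂ h 0 0
  simp only [mul_apply, Fin.sum_univ_two, neg_apply] at h00
  rw [trace_fin_two] at htrA htrB
  -- (q a - b p)² = -(det A) q² - (det B) b², writing A = [[a, b], [c, -a]], B = [[p, q], [r, -p]]
  have key : (B 0 1 * A 0 0 - A 0 1 * B 0 0) ^ 2
      = -A.det * B 0 1 ^ 2 - B.det * A 0 1 ^ 2 := by
    rw [det_fin_two, det_fin_two]
    linear_combination (-A 0 1 * B 0 1) * h00 + (A 0 0 * B 0 1 ^ 2) * htrA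
      + (B 0 0 * A 0 1 ^ 2) * htrB
  have hb : A 0 1 ^ 2 = 0 := by
    refine le_antisymm (not_lt.mp fun hpos => ?_) (sq_nonneg _)
    nlinarith [sq_nonneg (B 0 1 * A 0 0 - A 0 1 * B 0 0), mul_nonneg hA.le (sq_nonneg (B 0 1)),
      mul_pos hB hpos]
  rw [det_fin_two, pow_eq_zero_iff two_ne_zero |>.mp hb, show A 1 1 = -A 0 0 by
    linear_combination htrA] at hA
  nlinarith [sq_nonneg (A 0 0)]

section

variable {R : Type*} [CommRing R] {N : Matrix (Fin 2) (Fin 2) R}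

theorem Matrix.mul_self_eq_neg_det_smul_one (h : N.trace = 0) : N * N = -N.det • 1 := by
  have h11 : N 1 1 = -N 0 0 := by rw [trace_fin_two] at h; linear_combination h
  ext i j
  fin_cases i <;> fin_cases j <;> simp [mul_apply, det_fin_two, h11] <;> ring

theorem Matrix.det_smul_one_add_smul (h : N.trace = 0) (x y : R) :
    (x • 1 + y • N).det = x ^ 2 + N.det * y ^ 2 := by
  rw [trace_fin_two] at h
  simp [det_fin_two]
  linear_combination (x * y) * h

theorem Matrix.smul_one_add_smul_mul_smul_one_add_smul (h : N.trace = 0) (x y x' y' : R) :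
    (x • 1 + y • N) * (x' • 1 + y' • N)
      = (x * x' - N.det * y * y') • 1 + (x * y' + y * x') • N := by
  simp only [add_mul, mul_add, smul_mul_smul, one_mul, mul_one, mul_self_eq_neg_det_smul_one h,
    smul_smul]
  module

end

instance : IsTopologicalGroup SL2R := Matrix.SpecialLinearGroup.topologicalGroup

instance : T2Space SL2R := Matrix.SpecialLinearGroup.isClosedEmbedding_val.isEmbedding.t2Space

instance : IsClosed (Subgroup.center SL2R : Set SL2R) := by
  rw [Subgroup.coe_center, ← Set.centralizer_univ]
  exact Set.isClosed_centralizer _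

namespace SL2R

theorem coe_ne_smul_one_of_mk_ne_one {A : SL2R} (h : (A : PSL2R) ≠ 1) (r : ℝ) :
    (A : Matrix (Fin 2) (Fin 2) ℝ) ≠ r • 1 := by
  intro hA
  have hr : r ^ 2 = 1 := by simpa [hA, det_smul] using A.det_coe
  exact h ((QuotientGroup.eq_one_iff A).mpr (Matrix.SpecialLinearGroup.mem_center_iff.mpr
    ⟨r, by simpa using hr, by rw [hA, smul_one_eq_diagonal]; rfl⟩))

theorem commute_coe_of_commute_mk {A C : SL2R} (h : Commute (A : PSL2R) (C : PSL2R)) :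
    Commute (A : Matrix (Fin 2) (Fin 2) ℝ) C := by
  have hmem : (A * C)⁻¹ * (C * A) ∈ Subgroup.center SL2R := QuotientGroup.eq.mp h.eq
  obtain ⟨r, hr, hZ⟩ := Matrix.SpecialLinearGroup.mem_center_iff.mp hmem
  have hCA : (C : Matrix (Fin 2) (Fin 2) ℝ) * A = r • (A * C) := by
    have : C * A = A * C * ((A * C)⁻¹ * (C * A)) := by group
    rw [← Matrix.SpecialLinearGroup.coe_mul, this, Matrix.SpecialLinearGroup.coe_mul, ← hZ,
      scalar_apply, ← smul_one_eq_diagonal, Matrix.mul_smul, mul_one]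
    rfl
  rcases (by simpa using hr : r = 1 ∨ r = -1) with rfl | rfl
  · rw [one_smul] at hCA
    exact hCA.symm
  · exact absurd (by rw [hCA, neg_one_smul]) (mul_ne_neg_mul_of_det_pos (A := (C : Matrix _ _ ℝ))
      (B := A) (by simp) (by simp))

theorem mk_neg (C : SL2R) : ((-C : SL2R) : PSL2R) = C := by
  have : (-1 : SL2R) ∈ Subgroup.center SL2R :=
    Matrix.SpecialLinearGroup.mem_center_iff.mpr ⟨-1, by norm_num, by rw [map_neg, map_one]; rfl⟩
  rw [← mul_neg_one, QuotientGroup.mk_mul, (QuotientGroup.eq_one_iff _).mpr this, mul_one]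

end SL2R

/-- `t ↦ (c t, s t)` is a continuous homomorphism from `ℝ` to the group of norm-one elements
`x + y√δ` of `ℝ[√δ]`, surjective up to sign. -/
structure ConicParam (δ : ℝ) where
  c : ℝ → ℝ
  s : ℝ → ℝ
  continuous_c : Continuous c
  continuous_s : Continuous s
  c_add (t u : ℝ) : c (t + u) = c t * c u + δ * s t * s u
  s_add (t u : ℝ) : s (t + u) = c t * s u + s t * c u
  c_sq_sub_s_sq (t : ℝ) : c t ^ 2 - δ * s t ^ 2 = 1
  exists_eq_or_eq_neg (x y : ℝ) : x ^ 2 - δ * y ^ 2 = 1 →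
    ∃ t, (c t = x ∧ s t = y) ∨ (c t = -x ∧ s t = -y)

namespace ConicParam

noncomputable def ofNeg {δ : ℝ} (hδ : δ < 0) : ConicParam δ where
  c := Real.cos
  s t := Real.sin t / √(-δ)
  continuous_c := Real.continuous_cos
  continuous_s := by fun_prop
  c_add t u := by
    have hsq := Real.sq_sqrt (neg_nonneg.mpr hδ.le)
    have hne := (Real.sqrt_pos.mpr (neg_pos.mpr hδ)).ne'
    rw [Real.cos_add]
    field_simp
    linear_combination (-(Real.sin t * Real.sin u)) * hsq
  s_add t u := by rw [Real.sin_add]; ring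
  c_sq_sub_s_sq t := by
    rw [div_pow, Real.sq_sqrt (neg_nonneg.mpr hδ.le)]
    field_simp [hδ.ne]
    linear_combination Real.cos_sq_add_sin_sq t
  exists_eq_or_eq_neg x y h := by
    have hne := (Real.sqrt_pos.mpr (neg_pos.mpr hδ)).ne'
    set z : ℂ := ⟨x, √(-δ) * y⟩
    have hz : ‖z‖ = 1 := by
      rw [Complex.norm_def, Complex.normSq_mk, Real.sqrt_eq_one]
      linear_combination h + y ^ 2 * Real.sq_sqrt (neg_nonneg.mpr hδ.le)
    have hz0 : z ≠ 0 := norm_ne_zero_iff.mp (hz ▸ one_ne_zero)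
    refine ⟨z.arg, .inl ⟨?_, ?_⟩⟩
    · rw [Complex.cos_arg hz0, hz, div_one]
    · rw [Complex.sin_arg, hz, div_one]
      exact mul_div_cancel_left₀ y hne

def ofZero : ConicParam 0 where
  c _ := 1
  s t := t
  continuous_c := continuous_const
  continuous_s := continuous_id
  c_add t u := by ring
  s_add t u := by ring
  c_sq_sub_s_sq t := by ring
  exists_eq_or_eq_neg x y h := by
    rcases sq_eq_one_iff.mp (by linear_combination h : x ^ 2 = 1) with rfl | rfl
    · exact ⟨y, .inl ⟨rfl, rfl⟩⟩
    · exact ⟨-y, .inr ⟨by norm_num, rfl⟩⟩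

noncomputable def ofPos {δ : ℝ} (hδ : 0 < δ) : ConicParam δ where
  c := Real.cosh
  s t := Real.sinh t / √δ
  continuous_c := Real.continuous_cosh
  continuous_s := by fun_prop
  c_add t u := by
    have hsq := Real.sq_sqrt hδ.le
    have hne := (Real.sqrt_pos.mpr hδ).ne'
    rw [Real.cosh_add]
    field_simp
    linear_combination (Real.sinh t * Real.sinh u) * hsq
  s_add t u := by rw [Real.sinh_add]; ring
  c_sq_sub_s_sq t := by
    rw [div_pow, Real.sq_sqrt hδ.le]
    field_simp
    linear_combination Real.cosh_sq_sub_sinh_sq t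
  exists_eq_or_eq_neg x y h := by
    have hne := (Real.sqrt_pos.mpr hδ).ne'
    have hx : √(1 + (√δ * y) ^ 2) = |x| := by
      rw [← Real.sqrt_sq_eq_abs, mul_pow, Real.sq_sqrt hδ.le]
      congr 1
      linear_combination -h
    rcases le_or_gt 0 x with hx0 | hx0
    · refine ⟨Real.arsinh (√δ * y), .inl ⟨?_, ?_⟩⟩
      · rw [Real.cosh_arsinh, hx, abs_of_nonneg hx0]
      · rw [Real.sinh_arsinh]
        field_simp
    · refine ⟨Real.arsinh (-(√δ * y)), .inr ⟨?_, ?_⟩⟩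
      · rw [Real.cosh_arsinh, neg_sq, hx, abs_of_neg hx0]
      · rw [Real.sinh_arsinh]
        field_simp

theorem nonempty (δ : ℝ) : Nonempty (ConicParam δ) := by
  rcases lt_trichotomy δ 0 with hδ | rfl | hδ
  exacts [⟨ofNeg hδ⟩, ⟨ofZero⟩, ⟨ofPos hδ⟩]

variable {δ : ℝ} (P : ConicParam δ) {N : Matrix (Fin 2) (Fin 2) ℝ} (htr : N.trace = 0)
  (hdet : N.det = -δ)

/-- `N` plays the role of `√δ`. -/
noncomputable def toSL : Multiplicative ℝ →* SL2R :=
  MonoidHom.mk' (fun t => ⟨P.c t.toAdd • 1 + P.s t.toAdd • N, by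
    rw [det_smul_one_add_smul htr, hdet]; linear_combination P.c_sq_sub_s_sq t.toAdd⟩)
    fun t u => Subtype.ext <| by
      change P.c (t * u).toAdd • 1 + P.s (t * u).toAdd • N
        = (P.c t.toAdd • 1 + P.s t.toAdd • N) * (P.c u.toAdd • 1 + P.s u.toAdd • N)
      rw [smul_one_add_smul_mul_smul_one_add_smul htr, hdet, toAdd_mul, P.c_add, P.s_add]
      congr 2
      ring

theorem coe_toSL_ofAdd (t : ℝ) :
    (P.toSL htr hdet (.ofAdd t) : Matrix (Fin 2) (Fin 2) ℝ) = P.c t • 1 + P.s t • N :=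
  rfl

theorem continuous_toSL : Continuous (P.toSL htr hdet) :=
  continuous_induced_rng.mpr <| by
    change Continuous fun t : ℝ => P.c t • (1 : Matrix (Fin 2) (Fin 2) ℝ) + P.s t • N
    have := P.continuous_c
    have := P.continuous_s
    fun_prop

theorem mk_mem_range {C : SL2R} {x y : ℝ} (hC : (C : Matrix (Fin 2) (Fin 2) ℝ) = x • 1 + y • N) :
    (C : PSL2R) ∈ ((QuotientGroup.mk' _).comp (P.toSL htr hdet)).range := by
  have hxy : x ^ 2 - δ * y ^ 2 = 1 := by
    simpa [hC, det_smul_one_add_smul htr, hdet, sub_eq_add_neg] using C.det_coe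
  obtain ⟨t, ⟨hc, hs⟩ | ⟨hc, hs⟩⟩ := P.exists_eq_or_eq_neg x y hxy
  · refine ⟨Multiplicative.ofAdd t, congrArg _ (Subtype.ext ?_)⟩
    rw [coe_toSL_ofAdd, hc, hs, hC]
  · refine ⟨Multiplicative.ofAdd t, ?_⟩
    rw [MonoidHom.comp_apply, QuotientGroup.mk'_apply, ← SL2R.mk_neg]
    congr 1
    apply Subtype.ext
    rw [Matrix.SpecialLinearGroup.coe_neg, coe_toSL_ofAdd, hc, hs, hC]
    module

end ConicParam

namespace PSL2R

theorem exists_oneParameter_forall_commute_mem_range {g : PSL2R} (hg : g ≠ 1) :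
    ∃ ψ : Multiplicative ℝ →* PSL2R, Continuous ψ ∧ ∀ x, Commute g x → x ∈ ψ.range := by
  obtain ⟨A, rfl⟩ := QuotientGroup.mk_surjective g
  -- The commutant of `A` is spanned by `1` and the traceless part `N` of `A`, and `N² = -det N`.
  set N : Matrix (Fin 2) (Fin 2) ℝ := A - (trace (A : Matrix (Fin 2) (Fin 2) ℝ) / 2) • 1
  have htr : N.trace = 0 := by simp [N, trace_sub, trace_smul, trace_one]
  obtain ⟨P⟩ := ConicParam.nonempty (-N.det)
  refine ⟨(QuotientGroup.mk' _).comp (P.toSL htr (neg_neg _).symm),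
    continuous_quot_mk.comp (P.continuous_toSL _ _), fun x hx => ?_⟩
  obtain ⟨C, rfl⟩ := QuotientGroup.mk_surjective x
  obtain ⟨a, b, hC⟩ := exists_eq_smul_one_add_smul_of_commute
    (SL2R.coe_ne_smul_one_of_mk_ne_one hg) (SL2R.commute_coe_of_commute_mk hx)
  refine P.mk_mem_range htr _ (x := a + b * trace (A : Matrix (Fin 2) (Fin 2) ℝ) / 2) (y := b) ?_
  rw [hC]
  module

theorem commute_of_commute_of_ne_one {g x y : PSL2R} (hg : g ≠ 1) (hx : Commute g x)
    (hy : Commute g y) : Commute x y := by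
  obtain ⟨ψ, -, hψ⟩ := exists_oneParameter_forall_commute_mem_range hg
  exact setLike_mul_comm (hψ x hx) (hψ y hy)

end PSL2R

theorem nondiscrete_with_discrete_normal_subgroup_general (Γ Λ : Subgroup PSL2R)
    (hacc : (1 : PSL2R) ∈ closure ((Γ : Set PSL2R) \ {1}))
    (hΛnt : Λ ≠ ⊥) (hΛdisc : DiscreteTopology Λ)
    (hnormal : ∀ γ ∈ Γ, ∀ l ∈ Λ, γ * l * γ⁻¹ ∈ Λ) :
    IsCyclic Λ ∧
      ∃ Γ₁ : Subgroup PSL2R, Γ₁ ≤ Γ ∧ (∀ a ∈ Γ₁, ∀ b ∈ Γ₁, a * b = b * a) ∧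
        (Γ₁.subgroupOf Γ).FiniteIndex := by
  have hΓ := le_normalizer_of_conj_mem hnormal
  have hcomm : ∀ l ∈ Λ, ∀ μ ∈ Λ, Commute l μ := fun l hl μ hμ => by
    obtain ⟨γ, hγ, hγl, hγμ⟩ := exists_ne_one_commute_of_discrete hacc hΓ hl hμ
    exact PSL2R.commute_of_commute_of_ne_one hγ hγl hγμ
  obtain ⟨l₀, hl₀, hl₀1⟩ := (Λ.bot_or_exists_ne_one).resolve_left hΛnt
  obtain ⟨ψ, hψ, hψrange⟩ := PSL2R.exists_oneParameter_forall_commute_mem_range hl₀1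
  have : IsCyclic Λ := isCyclic_of_le_range hψ fun l hl => hψrange l (hcomm l₀ hl₀ l hl)
  refine ⟨this, Γ ⊓ Subgroup.centralizer Λ, inf_le_left,
    fun a ha b hb => PSL2R.commute_of_commute_of_ne_one hl₀1 (ha.2 l₀ hl₀) (hb.2 l₀ hl₀), ?_⟩
  rw [Subgroup.inf_subgroupOf_left]
  exact finiteIndex_centralizer_subgroupOf hΓ

/-- Let `Γ ≤ PSL₂(ℝ)` have the identity as an accumulation point
(i.e. `Γ` is not discrete), and let `Λ ≤ Γ` be a nontrivial normal discrete subgroup.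
Then `Λ` is cyclic and `Γ` contains a commutative subgroup of finite index. -/
theorem nondiscrete_with_discrete_normal_subgroup (Γ Λ : Subgroup PSL2R)
    (hacc : (1 : PSL2R) ∈ closure ((Γ : Set PSL2R) \ {1}))
    (hΛΓ : Λ ≤ Γ) (hΛnt : Λ ≠ ⊥) (hΛdisc : DiscreteTopology Λ)
    (hnormal : ∀ γ ∈ Γ, ∀ l ∈ Λ, γ * l * γ⁻¹ ∈ Λ) :
    IsCyclic Λ ∧
      ∃ Γ₁ : Subgroup PSL2R, Γ₁ ≤ Γ ∧ (∀ a ∈ Γ₁, ∀ b ∈ Γ₁, a * b = b * a) ∧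
        (Γ₁.subgroupOf Γ).FiniteIndex :=
  nondiscrete_with_discrete_normal_subgroup_general Γ Λ hacc hΛnt hΛdisc hnormal
end
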